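/- arXiv:2301.05569 — 8 statements merged into one kernel-verified Lean document; each statement's English description precedes it below -/
import Mathlib

section
/- Let r and s be primes and v, w positive integers with r^v + 1 = s^w. Then one of the following holds: (i) (r,s,v,w) = (2,3,3,2); (ii) r = 2, w = 1 and s = 2^v + 1; (iii) s = 2, v = 1 and r = 2^w - 1. -/
/-!
If `r = 2` then `s` is odd. For even `w = 2m`, `2 ^ v = (s ^ m - 1) (s ^ m + 1)` is a product of
two powers of two that differ by two, which forces `s ^ m = 3`. For odd `w`, the factor
`1 + s + ⋯ + s ^ (w - 1)` of `s ^ w - 1 = 2 ^ v` is odd, hence `1`, so `w = 1`.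

If `r` is odd then `s = 2`. An even `v` is impossible since `r ^ v + 1 ≡ 2 [MOD 4]`, and an
odd `v` is handled like the odd `w` above, with `-r` in place of `s`.
-/

open Finset

theorem Odd.geom_sum {R : Type*} [Ring R] {x : R} (hx : Odd x) {n : ℕ} (hn : Odd n) :
    Odd (∑ i ∈ range n, x ^ i) := by
  have hsplit : ∑ i ∈ range n, x ^ i = ∑ i ∈ range n, (x ^ i - 1) + n := by
    simp [sum_sub_distrib]
  rw [hsplit]
  exact (even_sum _ fun i _ => hx.pow.sub_odd odd_one).add_odd hn.natCast

theorem Int.abs_pow_sub_one_eq_of_dvd_two_pow {x : ℤ} {n k : ℕ} (hx : Odd x) (hn : Odd n)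
    (h : x ^ n - 1 ∣ 2 ^ k) : |x ^ n - 1| = |x - 1| := by
  have hG : (∑ i ∈ Finset.range n, x ^ i).natAbs ∣ 2 ^ k := by
    simpa using natAbs_dvd_natAbs.mpr ((Dvd.intro _ (geom_sum_mul x n)).trans h)
  have hG1 : (∑ i ∈ Finset.range n, x ^ i).natAbs = 1 :=
    ((Nat.coprime_two_right.mpr (natAbs_odd.mpr (hx.geom_sum hn))).pow_right k).eq_one_of_dvd hG
  rw [← geom_sum_mul, abs_mul, abs_eq_natAbs, hG1, Nat.cast_one, one_mul]

theorem Nat.eq_two_of_mul_add_two_eq_two_pow {a v : ℕ} (h : a * (a + 2) = 2 ^ v) : a = 2 := by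
  obtain ⟨i, -, rfl⟩ := (Nat.dvd_prime_pow Nat.prime_two).mp (Dvd.intro _ h)
  obtain ⟨j, -, hj⟩ := (Nat.dvd_prime_pow Nat.prime_two).mp (Dvd.intro_left _ h)
  rcases i with _ | _ | i <;> rcases j with _ | _ | j <;> simp [pow_succ] at hj ⊢ <;> omega

theorem Nat.sq_add_one_ne_two_pow {a : ℕ} (ha : 1 < a) (w : ℕ) : a ^ 2 + 1 ≠ 2 ^ w := by
  intro h
  obtain ⟨b, rfl | rfl⟩ := Nat.even_or_odd' a <;>
    rcases w with _ | _ | w <;> simp [pow_succ] at h <;> ring_nf at h <;> omega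

theorem eq_of_two_pow_add_one_eq_prime_pow {s v w : ℕ} (hs : s.Prime) (hv : 0 < v)
    (h : 2 ^ v + 1 = s ^ w) : (s = 3 ∧ v = 3 ∧ w = 2) ∨ (w = 1 ∧ s = 2 ^ v + 1) := by
  rcases Nat.even_or_odd w with ⟨m, rfl⟩ | hw
  · left
    have hsm : 1 ≤ s ^ m := Nat.one_le_pow _ _ hs.pos
    have hprod : (s ^ m - 1) * (s ^ m - 1 + 2) = 2 ^ v := by
      zify [hsm] at h ⊢
      linear_combination (-1 : ℤ) * h
    have h3 : s ^ m = 3 := by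
      have := Nat.eq_two_of_mul_add_two_eq_two_pow hprod
      omega
    obtain ⟨rfl, rfl⟩ := Nat.prime_three.pow_eq_iff.mp h3
    refine ⟨rfl, Nat.pow_right_injective le_rfl ?_, rfl⟩
    simp only at h ⊢
    omega
  · right
    have hs_odd : Odd s := by
      have : Odd (s ^ w) := h ▸ (Nat.even_pow.mpr ⟨even_two, hv.ne'⟩).add_one
      exact (Nat.odd_pow_iff hw.pos.ne').mp this
    have hz : (s : ℤ) ^ w - 1 = 2 ^ v := (eq_sub_of_add_eq (by exact_mod_cast h)).symm
    have := Int.abs_pow_sub_one_eq_of_dvd_two_pow (by exact_mod_cast hs_odd) hw (dvd_of_eq hz)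
    rcases abs_eq_abs.mp this with heq | heq
    · obtain rfl : w = 1 :=
        (Nat.pow_eq_self_iff hs.one_lt).mp (by exact_mod_cast sub_left_injective heq)
      exact ⟨rfl, by rw [h, pow_one]⟩
    · have : (1 : ℤ) ≤ s ^ w := by exact_mod_cast Nat.one_le_pow _ _ hs.pos
      have : (2 : ℤ) ≤ s := by exact_mod_cast hs.two_le
      linarith

theorem eq_one_of_pow_add_one_eq_two_pow {r v w : ℕ} (hr : Odd r) (hr1 : 1 < r) (hv : 0 < v)
    (h : r ^ v + 1 = 2 ^ w) : v = 1 := by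
  rcases Nat.even_or_odd v with ⟨k, rfl⟩ | hv_odd
  · have hrk : 1 < r ^ k := Nat.one_lt_pow (by omega) hr1
    exact absurd (by rw [← h]; ring) (Nat.sq_add_one_ne_two_pow hrk w)
  · have hz : (-(r : ℤ)) ^ v - 1 = -2 ^ w := by
      rw [hv_odd.neg_pow, ← neg_add']
      exact_mod_cast congrArg (fun n : ℕ => -(n : ℤ)) h
    have hr_odd : Odd (-(r : ℤ)) := (by exact_mod_cast hr : Odd (r : ℤ)).neg
    have := Int.abs_pow_sub_one_eq_of_dvd_two_pow hr_odd hv_odd (by rw [hz, neg_dvd])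
    rcases abs_eq_abs.mp this with heq | heq
    · rw [hv_odd.neg_pow] at heq
      exact (Nat.pow_eq_self_iff hr1).mp (by exact_mod_cast neg_inj.mp (sub_left_injective heq))
    · rw [hz] at heq
      have : (0 : ℤ) < 2 ^ w := by positivity
      have : (0 : ℤ) ≤ r := by positivity
      linarith

theorem stmt_0_general (r s v w : ℕ) (hr : r.Prime) (hs : s.Prime)
    (hv : 0 < v) (h : r ^ v + 1 = s ^ w) :
    (r = 2 ∧ s = 3 ∧ v = 3 ∧ w = 2) ∨
    (r = 2 ∧ w = 1 ∧ s = 2 ^ v + 1) ∨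
    (s = 2 ∧ v = 1 ∧ r = 2 ^ w - 1) := by
  rcases hr.eq_two_or_odd' with rfl | hr_odd
  · rcases eq_of_two_pow_add_one_eq_prime_pow hs hv h with ⟨hs3, hv3, hw2⟩ | ⟨hw1, hs2⟩
    · exact Or.inl ⟨rfl, hs3, hv3, hw2⟩
    · exact Or.inr (Or.inl ⟨rfl, hw1, hs2⟩)
  · obtain rfl : s = 2 := by
      have : Even (s ^ w) := h ▸ hr_odd.pow.add_one
      exact hs.even_iff.mp (Nat.even_pow.mp this).1
    obtain rfl := eq_one_of_pow_add_one_eq_two_pow hr_odd hr.one_lt hv h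
    rw [pow_one] at h
    exact Or.inr (Or.inr ⟨rfl, rfl, by omega⟩)

/-- Catalan-type lemma (Burness–Tong-Viet, Lemma 2.6): if `r, s` are primes and
`v, w` are positive integers with `r ^ v + 1 = s ^ w`, then either
`(r, s, v, w) = (2, 3, 3, 2)`, or `r = 2`, `w = 1` and `s = 2 ^ v + 1`, or
`s = 2`, `v = 1` and `r = 2 ^ w - 1`. -/
theorem stmt_0 (r s v w : ℕ) (hr : r.Prime) (hs : s.Prime)
    (hv : 0 < v) (hw : 0 < w) (h : r ^ v + 1 = s ^ w) :
    (r = 2 ∧ s = 3 ∧ v = 3 ∧ w = 2) ∨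
    (r = 2 ∧ w = 1 ∧ s = 2 ^ v + 1) ∨
    (s = 2 ∧ v = 1 ∧ r = 2 ^ w - 1) :=
  stmt_0_general r s v w hr hs hv h
end

section
/- Let p be a prime, V = (𝔽_p)^d, and G = V : H ≤ AGL(V) an affine permutation group with point stabiliser H ≤ GL(V). If G is almost elusive (has exactly one conjugacy class of derangements of prime order), then H acts transitively on V \ {0}, i.e., G is 2-transitive on V. -/
/-- If an affine permutation group `G = V : H ≤ AGL(V)` on `V = (𝔽_p)^d`
(containing all translations, with the stabiliser of `0` acting linearly) is
almost elusive, then the stabiliser of `0` acts transitively on `V \ {0}`,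
i.e. `G` is 2-transitive on `V`. -/
theorem stmt_7 (p d : ℕ) (hp : p.Prime)
    (G : Subgroup (Equiv.Perm (Fin d → ZMod p)))
    (htrans : ∀ v : Fin d → ZMod p, Equiv.addRight v ∈ G)
    (hstab : ∀ g ∈ G, g 0 = 0 → IsLinearMap (ZMod p) g)
    (hae : ∃ g : G, (∀ u : Fin d → ZMod p, (g : Equiv.Perm (Fin d → ZMod p)) u ≠ u) ∧
      (orderOf g).Prime ∧
      ∀ x : G, (∀ u : Fin d → ZMod p, (x : Equiv.Perm (Fin d → ZMod p)) u ≠ u) →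
        (orderOf x).Prime → IsConj g x) :
    ∀ v w : Fin d → ZMod p, v ≠ 0 → w ≠ 0 →
      ∃ g ∈ G, g 0 = 0 ∧ g v = w := by
  intro v w hv hw
  haveI : Fact p.Prime := ⟨hp⟩
  obtain ⟨g0, hg0der, hg0ord, hg0conj⟩ := hae
  -- powers of translations
  have hpow : ∀ (u : Fin d → ZMod p) (n : ℕ),
      (Equiv.addRight u) ^ n = Equiv.addRight (n • u) := by
    intro u n
    induction n with
    | zero => ext x; simp
    | succ n ih =>
      ext x
      simp [pow_succ, ih, Equiv.Perm.mul_apply, succ_nsmul, add_assoc]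
      ring
  have hsmul : ∀ u : Fin d → ZMod p, p • u = 0 := by
    intro u
    funext i
    simp [Pi.smul_apply, nsmul_eq_mul, ZMod.natCast_self]
  -- translations are derangements of order p
  have key : ∀ (u : Fin d → ZMod p) (hu : u ≠ 0),
      (∀ x : Fin d → ZMod p,
        ((⟨Equiv.addRight u, htrans u⟩ : G) : Equiv.Perm (Fin d → ZMod p)) x ≠ x) ∧
      (orderOf (⟨Equiv.addRight u, htrans u⟩ : G)).Prime := by
    intro u hu
    constructor
    · intro x h
      exact hu (by simpa using h)
    · have hord : orderOf (⟨Equiv.addRight u, htrans u⟩ : G) = p := by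
        apply orderOf_eq_prime
        · ext x
          simp [SubmonoidClass.coe_pow, hpow u p, hsmul u]
        · intro h
          apply hu
          have h' : Equiv.addRight u = 1 := congrArg Subtype.val h
          have := congrArg (fun f : Equiv.Perm (Fin d → ZMod p) => f 0) h'
          simpa using this
      rw [hord]; exact hp
  obtain ⟨hvd, hvo⟩ := key v hv
  obtain ⟨hwd, hwo⟩ := key w hw
  have hconj : IsConj (⟨Equiv.addRight v, htrans v⟩ : G)
      (⟨Equiv.addRight w, htrans w⟩ : G) :=
    (hg0conj _ hvd hvo).symm.trans (hg0conj _ hwd hwo)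
  obtain ⟨c, hc⟩ := hconj
  -- hc : c * tv * c⁻¹ = tw in G; push to permutations
  have hc' : ((c : G) : Equiv.Perm (Fin d → ZMod p)) * Equiv.addRight v
      = Equiv.addRight w * ((c : G) : Equiv.Perm (Fin d → ZMod p)) := by
    have := hc.eq
    have h2 := congrArg (fun z : G => (z : Equiv.Perm (Fin d → ZMod p))) this
    simpa using h2
  set x : Equiv.Perm (Fin d → ZMod p) := ((c : G) : Equiv.Perm (Fin d → ZMod p)) with hx
  have hxG : x ∈ G := ((c : G) : G).2
  have hkey : ∀ u : Fin d → ZMod p, x (u + v) = x u + w := by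
    intro u
    have := congrArg (fun f : Equiv.Perm (Fin d → ZMod p) => f u) hc'
    simpa [Equiv.Perm.mul_apply] using this
  refine ⟨Equiv.addRight (-(x 0)) * x, G.mul_mem (htrans _) hxG, ?_, ?_⟩
  · simp [Equiv.Perm.mul_apply]
  · have : x v = x 0 + w := by simpa using hkey 0
    simp [Equiv.Perm.mul_apply, this, add_assoc]
end

section
/- Let G = V : H be an affine permutation group on V = (𝔽_p)^d with H ≤ GL(V), p prime. Suppose h ∈ H has order p with Jordan canonical form consisting of a_i Jordan blocks of size i for 1 ≤ i ≤ p on V. Then there exists v ∈ V \ {0} such that (v, h) is a derangement of order p if and only if a_i > 0 for some 1 ≤ i ≤ p - 1. -/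
/-- The `n × n` unipotent Jordan block over `F`. -/
def jordanBlock (F : Type*) [Zero F] [One F] (n : ℕ) : Matrix (Fin n) (Fin n) F :=
  Matrix.of fun i j => if j = i then 1 else if (j : ℕ) = (i : ℕ) + 1 then 1 else 0

/-- Index type for a Jordan form with `a i` blocks of size `i` for `1 ≤ i ≤ p`. -/
abbrev jordanIdx (p : ℕ) (a : ℕ → ℕ) := Σ i : Fin p, Fin (a ((i : ℕ) + 1))

/-- The block diagonal unipotent matrix with `a i` Jordan blocks of size `i`
for each `1 ≤ i ≤ p`. -/
def jordanMat (F : Type*) [Zero F] [One F] (p : ℕ) (a : ℕ → ℕ) :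
    Matrix (Σ x : jordanIdx p a, Fin ((x.1 : ℕ) + 1))
      (Σ x : jordanIdx p a, Fin ((x.1 : ℕ) + 1)) F :=
  Matrix.blockDiagonal' fun x : jordanIdx p a => jordanBlock F ((x.1 : ℕ) + 1)

open Matrix Finset in
lemma aux_blockDiagonal'_mulVec {o : Type*} [Fintype o] [DecidableEq o]
    {m' : o → Type*} [∀ i, Fintype (m' i)] {α : Type*} [NonUnitalNonAssocSemiring α]
    (M : ∀ i, Matrix (m' i) (m' i) α) (w : (Σ i, m' i) → α) (k : o) (i : m' k) :
    (blockDiagonal' M).mulVec w ⟨k, i⟩ = (M k).mulVec (fun j => w ⟨k, j⟩) i := by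
  rw [mulVec, dotProduct, ← Finset.univ_sigma_univ, Finset.sum_sigma]
  rw [Finset.sum_eq_single k]
  · simp [mulVec, dotProduct]
  · intro k' _ hk'
    apply Finset.sum_eq_zero
    intro j _
    rw [blockDiagonal'_apply_ne _ _ _ (Ne.symm hk'), zero_mul]
  · simp

open Matrix Finset in
lemma aux_jordanBlock_mulVec {F : Type*} [NonAssocSemiring F] (n : ℕ) (u : Fin n → F) (i : Fin n) :
    (jordanBlock F n).mulVec u i
      = u i + if h : (i:ℕ)+1 < n then u ⟨(i:ℕ)+1, h⟩ else 0 := by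
  rw [mulVec, dotProduct]
  have : ∀ j : Fin n, (jordanBlock F n) i j * u j
      = (if j = i then u j else 0) + (if (j:ℕ) = (i:ℕ)+1 then u j else 0) := by
    intro j
    by_cases h1 : j = i
    · subst h1; simp [jordanBlock, Matrix.of_apply]
    · by_cases h2 : (j:ℕ) = (i:ℕ)+1 <;> simp [jordanBlock, Matrix.of_apply, h1, h2]
  rw [Finset.sum_congr rfl (fun j _ => this j), Finset.sum_add_distrib]
  congr 1
  · simp
  · by_cases h : (i:ℕ)+1 < n
    · rw [dif_pos h, Finset.sum_eq_single (⟨(i:ℕ)+1, h⟩ : Fin n)]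
      · simp
      · intro j _ hj
        rw [if_neg]
        intro hc
        exact hj (Fin.ext hc)
      · simp
    · rw [dif_neg h]
      apply Finset.sum_eq_zero
      intro j _
      rw [if_neg]
      intro hc
      omega

set_option maxHeartbeats 1000000 in
lemma aux_S {p : ℕ} {a : ℕ → ℕ} (w : (Σ x : jordanIdx p a, Fin ((x.1 : ℕ) + 1)) → ZMod p)
    (x : jordanIdx p a) (i : Fin ((x.1 : ℕ) + 1)) :
    (jordanMat (ZMod p) p a - 1).mulVec w ⟨x, i⟩
      = if h : (i:ℕ)+1 < (x.1:ℕ)+1 then w ⟨x, ⟨(i:ℕ)+1, h⟩⟩ else 0 := by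
  rw [Matrix.sub_mulVec, Matrix.one_mulVec]
  unfold jordanMat
  simp only [Pi.sub_apply]
  rw [aux_blockDiagonal'_mulVec, aux_jordanBlock_mulVec]
  exact add_sub_cancel_left _ _

lemma aux_Spow {p : ℕ} {a : ℕ → ℕ} (n : ℕ)
    (w : (Σ x : jordanIdx p a, Fin ((x.1 : ℕ) + 1)) → ZMod p)
    (x : jordanIdx p a) (i : Fin ((x.1 : ℕ) + 1)) :
    ((jordanMat (ZMod p) p a - 1) ^ n).mulVec w ⟨x, i⟩
      = if h : (i:ℕ)+n < (x.1:ℕ)+1 then w ⟨x, ⟨(i:ℕ)+n, h⟩⟩ else 0 := by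
  induction n generalizing w with
  | zero =>
    simp
    intro hlt
    have := i.isLt
    omega
  | succ n ih =>
    rw [pow_succ, ← Matrix.mulVec_mulVec, ih]
    by_cases h1 : (i:ℕ)+n < (x.1:ℕ)+1
    · rw [dif_pos h1, aux_S]
      by_cases h2 : (i:ℕ)+(n+1) < (x.1:ℕ)+1
      · rw [dif_pos (by omega : (i:ℕ)+n+1 < (x.1:ℕ)+1), dif_pos h2]
        rfl
      · rw [dif_neg (by omega : ¬((i:ℕ)+n+1 < (x.1:ℕ)+1)), dif_neg h2]
    · rw [dif_neg h1, dif_neg (by omega : ¬((i:ℕ)+(n+1) < (x.1:ℕ)+1))]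

open Polynomial in
lemma aux_geom_poly (p : ℕ) (hp : p.Prime) :
    (∑ k ∈ Finset.range p, (X : Polynomial (ZMod p)) ^ k) = (X - 1) ^ (p - 1) := by
  haveI : Fact p.Prime := ⟨hp⟩
  have hX : (X - 1 : Polynomial (ZMod p)) ≠ 0 := by
    intro hc
    have := congrArg (Polynomial.coeff · 1) hc
    simp [Polynomial.coeff_one] at this
  apply mul_right_cancel₀ hX
  rw [geom_sum_mul, ← pow_succ, Nat.sub_add_cancel hp.one_le]
  have : ((X : Polynomial (ZMod p)) - 1) ^ p = X ^ p - 1 ^ p := sub_pow_char X 1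
  rw [this, one_pow]

open Polynomial in
lemma aux_geom_mat {n : Type*} [Fintype n] [DecidableEq n] (p : ℕ) (hp : p.Prime)
    (M : Matrix n n (ZMod p)) :
    (∑ k ∈ Finset.range p, M ^ k) = (M - 1) ^ (p - 1) := by
  have h := congrArg (Polynomial.aeval M) (aux_geom_poly p hp)
  simpa using h

lemma aux_iter {d p : ℕ} (h : Matrix (Fin d) (Fin d) (ZMod p)) (v : Fin d → ZMod p)
    (m : ℕ) (u : Fin d → ZMod p) :
    (fun u : Fin d → ZMod p => h.mulVec u + v)^[m] u
      = (h ^ m).mulVec u + (∑ k ∈ Finset.range m, h ^ k).mulVec v := by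
  induction m with
  | zero => simp
  | succ m ih =>
    rw [Function.iterate_succ_apply', ih]
    simp only [Matrix.mulVec_add, Matrix.mulVec_mulVec]
    rw [pow_succ', Finset.sum_range_succ']
    simp only [Matrix.add_mulVec, pow_zero, Matrix.one_mulVec, Matrix.mulVec_mulVec]
    have : ∀ k, (h ^ (k+1)) = h * h ^ k := fun k => pow_succ' h k
    simp only [this, Finset.mul_sum]
    abel


/-- Let `G = V : H` be affine on `V = (𝔽_p)^d` and let `h ∈ H` have order `p`
with Jordan form having `a i` blocks of size `i` on `V` (`1 ≤ i ≤ p`). Then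
there exists `v ∈ V \ {0}` such that `(v, h)` is a derangement of order `p`
if and only if `a i > 0` for some `1 ≤ i ≤ p - 1`. -/
theorem stmt_8 (p d : ℕ) (hp : p.Prime) (a : ℕ → ℕ)
    (h : Matrix (Fin d) (Fin d) (ZMod p))
    (hhp : h ^ p = 1) (hne : h ≠ 1)
    (hjordan : ∃ e : (Fin d → ZMod p) ≃ₗ[ZMod p]
        ((Σ x : jordanIdx p a, Fin ((x.1 : ℕ) + 1)) → ZMod p),
      ∀ w, e (h.mulVec (e.symm w)) = (jordanMat (ZMod p) p a).mulVec w) :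
    (∃ v : Fin d → ZMod p, v ≠ 0 ∧
      (∀ u : Fin d → ZMod p, h.mulVec u + v ≠ u) ∧
      (fun u : Fin d → ZMod p => h.mulVec u + v)^[p] = id ∧
      (fun u : Fin d → ZMod p => h.mulVec u + v) ≠ id) ↔
    (∃ i : ℕ, 1 ≤ i ∧ i ≤ p - 1 ∧ 0 < a i) := by
  haveI : Fact p.Prime := ⟨hp⟩
  have hp2 : 2 ≤ p := hp.two_le
  obtain ⟨e, he⟩ := hjordan
  have he' : ∀ v, e (h.mulVec v) = (jordanMat (ZMod p) p a).mulVec (e v) := fun v => by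
    simpa using he (e v)
  have hS : ∀ v, e ((h - 1).mulVec v) = (jordanMat (ZMod p) p a - 1).mulVec (e v) := by
    intro v
    rw [Matrix.sub_mulVec, Matrix.sub_mulVec, Matrix.one_mulVec, Matrix.one_mulVec,
      map_sub, he']
  have hSpow : ∀ (k : ℕ) (v : Fin d → ZMod p),
      e (((h - 1) ^ k).mulVec v) = ((jordanMat (ZMod p) p a - 1) ^ k).mulVec (e v) := by
    intro k
    induction k with
    | zero => intro v; simp
    | succ k ih =>
      intro v
      rw [pow_succ, pow_succ, ← Matrix.mulVec_mulVec, ← Matrix.mulVec_mulVec, ih, hS]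
  have hgeomh : (∑ k ∈ Finset.range p, h ^ k) = (h - 1) ^ (p - 1) := aux_geom_mat p hp h
  constructor
  · rintro ⟨v, hv0, hfix, hiter, hnid⟩
    have h1 : ((h - 1) ^ (p - 1)).mulVec v = 0 := by
      have h0 := congrFun hiter 0
      rw [aux_iter, hgeomh] at h0
      simpa using h0
    have hw1 : ((jordanMat (ZMod p) p a - 1) ^ (p - 1)).mulVec (-(e v)) = 0 := by
      rw [Matrix.mulVec_neg, ← hSpow, h1, map_zero, neg_zero]
    have hw2 : ∀ u, (jordanMat (ZMod p) p a - 1).mulVec u ≠ -(e v) := by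
      intro u hc
      apply hfix (e.symm u)
      apply e.injective
      rw [map_add, he', e.apply_symm_apply]
      rw [Matrix.sub_mulVec, Matrix.one_mulVec] at hc
      have := sub_eq_iff_eq_add.mp hc
      rw [this]
      abel
    by_contra hR
    push_neg at hR
    have hall : ∀ x : jordanIdx p a, (x.1 : ℕ) = p - 1 := by
      intro x
      by_contra hx
      have h1x : (x.1 : ℕ) < p := x.1.isLt
      have h2x : 0 < a ((x.1 : ℕ) + 1) := x.2.pos
      have := hR ((x.1 : ℕ) + 1) (by omega) (by omega)
      omega
    have hlast : ∀ (x : jordanIdx p a) (i : Fin ((x.1 : ℕ) + 1)), (i : ℕ) = p - 1 →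
        (-(e v)) ⟨x, i⟩ = 0 := by
      intro x i hi
      have h0 := congrFun hw1 ⟨x, ⟨0, Nat.succ_pos _⟩⟩
      rw [aux_Spow, dif_pos (show (0:ℕ) + (p - 1) < (x.1:ℕ) + 1 by rw [hall x]; omega)] at h0
      have hieq : i = ⟨0 + (p - 1), by rw [hall x]; omega⟩ := Fin.ext (by simp only [Fin.val_mk]; omega)
      rw [hieq]
      simpa using h0
    apply hw2 (fun z => if h0 : (z.2 : ℕ) = 0 then 0
      else (-(e v)) ⟨z.1, ⟨(z.2 : ℕ) - 1, by omega⟩⟩)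
    funext z
    obtain ⟨x, i⟩ := z
    rw [aux_S]
    by_cases hlt : (i:ℕ)+1 < (x.1:ℕ)+1
    · rw [dif_pos hlt, dif_neg (by simp : ¬((⟨(i:ℕ)+1, hlt⟩ : Fin ((x.1:ℕ)+1)) : ℕ) = 0)]
      have hieq : (⟨((⟨(i:ℕ)+1, hlt⟩ : Fin ((x.1:ℕ)+1)) : ℕ) - 1, by omega⟩ : Fin ((x.1:ℕ)+1))
          = i := Fin.ext (by simp)
      rw [hieq]
    · rw [dif_neg hlt]
      have hi : (i : ℕ) = p - 1 := by
        have := hall x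
        have := i.isLt
        omega
      exact (hlast x i hi).symm
  · rintro ⟨i0, hi1, hi2, hai⟩
    have hx1 : i0 - 1 < p := by omega
    have ha' : 0 < a (((⟨i0 - 1, hx1⟩ : Fin p) : ℕ) + 1) := by
      simpa [show i0 - 1 + 1 = i0 by omega] using hai
    have hlt0 : i0 - 1 < ((⟨⟨i0 - 1, hx1⟩, ⟨0, ha'⟩⟩ : jordanIdx p a).1 : ℕ) + 1 :=
      Nat.lt_succ_self _
    set w : (Σ x : jordanIdx p a, Fin ((x.1 : ℕ) + 1)) → ZMod p :=
      Pi.single ⟨⟨⟨i0 - 1, hx1⟩, ⟨0, ha'⟩⟩, ⟨i0 - 1, hlt0⟩⟩ 1 with hw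
    have hNoFix : ∀ u, h.mulVec u + e.symm (-w) ≠ u := by
      intro u hc
      have hc' := congrArg e hc
      rw [map_add, he', e.apply_symm_apply] at hc'
      have hSu : (jordanMat (ZMod p) p a - 1).mulVec (e u) = w := by
        rw [Matrix.sub_mulVec, Matrix.one_mulVec, eq_sub_of_add_eq hc']
        abel
      have h0 := congrFun hSu ⟨⟨⟨i0 - 1, hx1⟩, ⟨0, ha'⟩⟩, ⟨i0 - 1, hlt0⟩⟩
      rw [aux_S, dif_neg (lt_irrefl _)] at h0
      rw [hw] at h0
      simp [Pi.single_eq_same] at h0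
    have hNv : ((h - 1) ^ (p - 1)).mulVec (e.symm (-w)) = 0 := by
      apply e.injective
      rw [hSpow, map_zero, e.apply_symm_apply, Matrix.mulVec_neg, neg_eq_zero]
      funext z
      obtain ⟨x, i⟩ := z
      rw [aux_Spow]
      by_cases hc : (i:ℕ) + (p - 1) < (x.1:ℕ) + 1
      · rw [dif_pos hc, hw]
        apply Pi.single_eq_of_ne
        intro hceq
        have hxx : x = ⟨⟨i0 - 1, hx1⟩, ⟨0, ha'⟩⟩ := congrArg Sigma.fst hceq
        have hxv : (x.1 : ℕ) = i0 - 1 := by rw [hxx]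
        omega
      · rw [dif_neg hc]
        rfl
    refine ⟨e.symm (-w), ?_, hNoFix, ?_, ?_⟩
    · intro hc
      apply hNoFix 0
      rw [hc]
      simp
    · funext u
      rw [aux_iter, hhp, Matrix.one_mulVec, hgeomh, hNv, add_zero]
      rfl
    · intro hc
      exact hNoFix 0 (congrFun hc 0)
end

section
/- Let d and k be positive integers with k dividing d, and let p be a prime. Let h ∈ GL_{d/k}(p^k) be an element of order p with Jordan form consisting of a_i blocks of size i (1 ≤ i ≤ p) on the natural module (𝔽_{p^k})^{d/k}. Then, viewing h as an element of GL_d(p) via restriction of scalars, h has Jordan form consisting of k·a_i blocks of size i for each 1 ≤ i ≤ p. -/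
lemma jordanMat_mulVec {F : Type*} [NonAssocSemiring F] (p : ℕ) (a : ℕ → ℕ)
    (w : (Σ x : jordanIdx p a, Fin ((x.1 : ℕ) + 1)) → F) (x : jordanIdx p a)
    (j : Fin ((x.1 : ℕ) + 1)) :
    (jordanMat F p a).mulVec w ⟨x, j⟩ =
      w ⟨x, j⟩ + if h : (j : ℕ) + 1 < (x.1 : ℕ) + 1 then w ⟨x, ⟨(j : ℕ) + 1, h⟩⟩ else 0 := by
  classical
  rw [Matrix.mulVec, dotProduct, ← Finset.univ_sigma_univ, Finset.sum_sigma]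
  rw [Finset.sum_eq_single x (fun x' _ hne => by
        apply Finset.sum_eq_zero
        intro l _
        rw [jordanMat, Matrix.blockDiagonal'_apply_ne _ _ _ (Ne.symm hne), zero_mul])
      (fun hx => absurd (Finset.mem_univ x) hx)]
  have hblk : ∀ l : Fin ((x.1 : ℕ) + 1),
      (jordanMat F p a) ⟨x, j⟩ ⟨x, l⟩ = jordanBlock F ((x.1 : ℕ) + 1) j l := fun l => by
    rw [jordanMat, Matrix.blockDiagonal'_apply_eq]
  calc (∑ l, (jordanMat F p a) ⟨x, j⟩ ⟨x, l⟩ * w ⟨x, l⟩)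
      = ∑ l, ((if l = j then w ⟨x, l⟩ else 0)
          + (if (l : ℕ) = (j : ℕ) + 1 then w ⟨x, l⟩ else 0)) := by
        refine Finset.sum_congr rfl fun l _ => ?_
        rw [hblk l, jordanBlock, Matrix.of_apply]
        split_ifs with h1 h2 <;> first
          | (exfalso; omega)
          | (exfalso; exact absurd (Fin.val_eq_of_eq h1) (by omega))
          | simp
    _ = w ⟨x, j⟩ + if h : (j : ℕ) + 1 < (x.1 : ℕ) + 1 then w ⟨x, ⟨(j : ℕ) + 1, h⟩⟩ else 0 := by
        rw [Finset.sum_add_distrib]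
        congr 1
        · simp
        · by_cases hlt : (j : ℕ) + 1 < (x.1 : ℕ) + 1
          · rw [dif_pos hlt]
            have hcond : ∀ l : Fin ((x.1 : ℕ) + 1),
                ((l : ℕ) = (j : ℕ) + 1) = (l = ⟨(j : ℕ) + 1, hlt⟩) := fun l =>
              propext ⟨fun hl => Fin.ext hl, fun hl => by subst hl; rfl⟩
            simp_rw [hcond]
            simp
          · rw [dif_neg hlt]
            apply Finset.sum_eq_zero
            intro l _
            rw [if_neg (by have := l.isLt; omega)]

/-- Restriction-of-scalars equivalence between `J → F` and `J' → R` given a basis of `F`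
over `R` and a bijection `J' ≃ J × κ`. -/
noncomputable def restrEquiv {R F J J' κ : Type*} [Semiring R] [AddCommMonoid F] [Module R F]
    [Fintype κ] (B : Module.Basis κ R F) (ι : J' ≃ J × κ) : (J → F) ≃ₗ[R] (J' → R) where
  toFun w y := B.equivFun (w (ι y).1) (ι y).2
  invFun v x := B.equivFun.symm fun c => v (ι.symm (x, c))
  map_add' w₁ w₂ := funext fun y => by simp
  map_smul' r w := funext fun y => by simp
  left_inv w := funext fun x => by
    simp only [Equiv.apply_symm_apply]
    exact B.equivFun.symm_apply_apply (w x)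
  right_inv v := funext fun y => by
    simp only [LinearEquiv.apply_symm_apply]
    rw [Prod.mk.eta, Equiv.symm_apply_apply]

lemma restrEquiv_apply {R F J J' κ : Type*} [Semiring R] [AddCommMonoid F] [Module R F]
    [Fintype κ] (B : Module.Basis κ R F) (ι : J' ≃ J × κ) (w : J → F) (y : J') :
    restrEquiv B ι w y = B.equivFun (w (ι y).1) (ι y).2 := rfl

lemma restrEquiv_symm_coord {R F J J' κ : Type*} [Semiring R] [AddCommMonoid F] [Module R F]
    [Fintype κ] (B : Module.Basis κ R F) (ι : J' ≃ J × κ) (v : J' → R) (x : J) (c : κ) :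
    B.equivFun ((restrEquiv B ι).symm v x) c = v (ι.symm (x, c)) := by
  show B.equivFun (B.equivFun.symm fun c => v (ι.symm (x, c))) c = _
  rw [LinearEquiv.apply_symm_apply]

/-- The index bijection between the Jordan index set for `k * a` blocks and the product of
the one for `a` blocks with `Fin k`, preserving block size and position within a block. -/
def jordanReindex (p k : ℕ) (a : ℕ → ℕ) :
    (Σ x : jordanIdx p (fun i => k * a i), Fin ((x.1 : ℕ) + 1)) ≃
      (Σ x : jordanIdx p a, Fin ((x.1 : ℕ) + 1)) × Fin k where
  toFun y :=
    (⟨⟨y.1.1, ((finProdFinEquiv.symm y.1.2 : Fin k × Fin (a ((y.1.1 : ℕ) + 1))).2)⟩, y.2⟩,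
      (finProdFinEquiv.symm y.1.2).1)
  invFun z := ⟨⟨z.1.1.1, finProdFinEquiv (z.2, z.1.1.2)⟩, z.1.2⟩
  left_inv y := by
    obtain ⟨⟨i, n'⟩, j⟩ := y
    show Sigma.mk (β := fun x : jordanIdx p (fun i => k * a i) => Fin ((x.1 : ℕ) + 1))
        (Sigma.mk i (finProdFinEquiv ((finProdFinEquiv.symm n').1, (finProdFinEquiv.symm n').2))) j
      = Sigma.mk (Sigma.mk i n') j
    rw [Prod.mk.eta, Equiv.apply_symm_apply]
  right_inv z := by
    obtain ⟨⟨⟨i, q⟩, j⟩, c⟩ := z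
    show (Sigma.mk (β := fun x : jordanIdx p a => Fin ((x.1 : ℕ) + 1))
        (Sigma.mk i (finProdFinEquiv.symm (finProdFinEquiv (c, q))).2) j,
        (finProdFinEquiv.symm (finProdFinEquiv (c, q))).1)
      = (Sigma.mk (Sigma.mk i q) j, c)
    rw [Equiv.symm_apply_apply]

/-- The key intertwining: under `restrEquiv`, the Jordan matrix over `F` with `a i` blocks
corresponds to the Jordan matrix over `R` with `k * a i` blocks. -/
lemma restrEquiv_jordan {R F : Type*} [Semiring R] [NonAssocSemiring F] [Module R F]
    (p k : ℕ) (a : ℕ → ℕ) (B : Module.Basis (Fin k) R F)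
    (v : (Σ x : jordanIdx p (fun i => k * a i), Fin ((x.1 : ℕ) + 1)) → R) :
    restrEquiv B (jordanReindex p k a)
        ((jordanMat F p a).mulVec ((restrEquiv B (jordanReindex p k a)).symm v)) =
      (jordanMat R p (fun i => k * a i)).mulVec v := by
  set ι := jordanReindex p k a
  set w := (restrEquiv B ι).symm v with hw
  funext y
  obtain ⟨⟨i, n'⟩, j⟩ := y
  rw [restrEquiv_apply]
  have hι : ι ⟨⟨i, n'⟩, j⟩ =
      (⟨⟨i, (finProdFinEquiv.symm n' : Fin k × Fin (a ((i : ℕ) + 1))).2⟩, j⟩,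
        (finProdFinEquiv.symm n').1) := rfl
  rw [hι]
  set c := (finProdFinEquiv.symm n' : Fin k × Fin (a ((i : ℕ) + 1))).1 with hc
  set q := (finProdFinEquiv.symm n' : Fin k × Fin (a ((i : ℕ) + 1))).2 with hq
  have hsymm : ∀ j' : Fin ((i : ℕ) + 1),
      ι.symm (⟨⟨i, q⟩, j'⟩, c) = ⟨⟨i, n'⟩, j'⟩ := fun j' => by
    rw [Equiv.symm_apply_eq]
    rfl
  rw [jordanMat_mulVec p a w ⟨i, q⟩ j,
    jordanMat_mulVec p (fun i => k * a i) v ⟨i, n'⟩ j]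
  by_cases hlt : (j : ℕ) + 1 < (i : ℕ) + 1
  · rw [dif_pos hlt, dif_pos hlt, map_add, Pi.add_apply, hw,
      restrEquiv_symm_coord, restrEquiv_symm_coord, hsymm, hsymm]
  · rw [dif_neg hlt, dif_neg hlt, add_zero, add_zero, hw, restrEquiv_symm_coord, hsymm]

/-- Restriction of scalars and Jordan forms: let `k ∣ d`, `m = d / k`, and let
`h ∈ GL_m(p^k)` have order `p` with Jordan form having `a i` blocks of size
`i` over `𝔽_{p^k}`. Viewing `h` as an element of `GL_d(p)` via restriction of
scalars, `h` has Jordan form with `k * a i` blocks of size `i` over `𝔽_p`. -/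
theorem stmt_9 (p k m d : ℕ) [Fact p.Prime] (hk : 1 ≤ k) (hd : d = m * k)
    (a : ℕ → ℕ) (h : Matrix (Fin m) (Fin m) (GaloisField p k))
    (hhp : h ^ p = 1) (hne : h ≠ 1)
    (hjordan : ∃ e : (Fin m → GaloisField p k) ≃ₗ[GaloisField p k]
        ((Σ x : jordanIdx p a, Fin ((x.1 : ℕ) + 1)) → GaloisField p k),
      ∀ w, e (h.mulVec (e.symm w)) = (jordanMat (GaloisField p k) p a).mulVec w) :
    ∃ e : (Fin m → GaloisField p k) ≃ₗ[ZMod p]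
        ((Σ x : jordanIdx p (fun i => k * a i), Fin ((x.1 : ℕ) + 1)) → ZMod p),
      ∀ w, e (h.mulVec (e.symm w)) =
        (jordanMat (ZMod p) p (fun i => k * a i)).mulVec w := by
  classical
  obtain ⟨e, he⟩ := hjordan
  have hfr : Module.finrank (ZMod p) (GaloisField p k) = k := GaloisField.finrank p (by omega)
  let B : Module.Basis (Fin k) (ZMod p) (GaloisField p k) :=
    (Module.finBasis (ZMod p) (GaloisField p k)).reindex (finCongr hfr)
  let E₂ := restrEquiv B (jordanReindex p k a)
  refine ⟨(e.restrictScalars (ZMod p)).trans E₂, fun v => ?_⟩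
  have hsym : ((e.restrictScalars (ZMod p)).trans E₂).symm v = e.symm (E₂.symm v) := rfl
  have happ : ((e.restrictScalars (ZMod p)).trans E₂) (h.mulVec (e.symm (E₂.symm v)))
      = E₂ (e (h.mulVec (e.symm (E₂.symm v)))) := rfl
  rw [hsym, happ, he]
  exact restrEquiv_jordan p k a B v
end

section
/- Let G be a finite group, G₀ ⊴ G a normal subgroup, and H ≤ G with G = G₀H; set H₀ = H ∩ G₀. Let r be a prime and suppose the number of G₀-conjugacy classes of elements of order r in G₀ is strictly greater than the number of H₀-conjugacy classes of elements of order r in H₀. Then there exists an element y ∈ G₀ of order r such that y^G ∩ H = ∅. -/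
/-!
Each order-`r` class of `H₀` lies in a single order-`r` class of `G₀`, so counting gives an
order-`r` class of `G₀` containing no element of `H₀`; let `y` represent it. If `g y g⁻¹ ∈ H`,
write `g⁻¹ = u h` with `u ∈ G₀`, `h ∈ H`: then `u⁻¹ y u = h (g y g⁻¹) h⁻¹` lies in `H ∩ G₀`
and is `G₀`-conjugate to `y`, a contradiction.
-/

open scoped Pointwise

namespace Subgroup

variable {G : Type*} [Group G] {K H : Subgroup G}

theorem exists_isConj_inclusion_of_mul_eq_univ (hKH : (K : Set G) * (H : Set G) = Set.univ)
    (y : K) {g : G} (hg : g * y * g⁻¹ ∈ H) :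
    ∃ z : ↥(H ⊓ K), IsConj (inclusion inf_le_right z) y := by
  obtain ⟨u, hu, h, hh, hgu⟩ : g⁻¹ ∈ (K : Set G) * H := hKH ▸ Set.mem_univ _
  have hconj : u⁻¹ * y * u = h * (g * y * g⁻¹) * h⁻¹ := by
    rw [← inv_inv g, ← hgu]; group
  have hzH : u⁻¹ * y * u ∈ H := hconj ▸ H.mul_mem (H.mul_mem hh hg) (H.inv_mem hh)
  have hzK : u⁻¹ * y * u ∈ K := K.mul_mem (K.mul_mem (K.inv_mem hu) y.2) hu
  refine ⟨⟨_, hzH, hzK⟩, isConj_iff.mpr ⟨⟨u, hu⟩, ?_⟩⟩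
  ext
  simp only [coe_mul, coe_inclusion, InvMemClass.coe_inv]
  group

end Subgroup

theorem stmt_12_general {G : Type*} [Group G] [Finite G]
    (G₀ H : Subgroup G)
    (hfact : (G₀ : Set G) * (H : Set G) = Set.univ)
    (r : ℕ)
    (hcount : (ConjClasses.mk '' {g : ↥G₀ | orderOf g = r}).ncard >
      (ConjClasses.mk '' {g : ↥(H ⊓ G₀) | orderOf g = r}).ncard) :
    ∃ y : G, y ∈ G₀ ∧ orderOf y = r ∧ ∀ g : G, g * y * g⁻¹ ∉ H := by
  set ι := Subgroup.inclusion (inf_le_right : H ⊓ G₀ ≤ G₀)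
  obtain ⟨_, ⟨y, hy, rfl⟩, hy_notMem⟩ := Set.exists_mem_notMem_of_ncard_lt_ncard
    ((Set.ncard_image_le (f := ConjClasses.map ι) (Set.toFinite _)).trans_lt hcount)
  refine ⟨y, y.2, (Subgroup.orderOf_coe y).trans hy, fun g hg => hy_notMem ?_⟩
  obtain ⟨z, c, hzy⟩ := Subgroup.exists_isConj_inclusion_of_mul_eq_univ hfact y hg
  have hz : orderOf z = r := by
    rw [← orderOf_injective ι (Subgroup.inclusion_injective _), hzy.orderOf_eq]
    exact hy
  exact ⟨ConjClasses.mk z, ⟨z, hz, rfl⟩, ConjClasses.mk_eq_mk_iff_isConj.mpr ⟨c, hzy⟩⟩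

/-- Let `G` be a finite group, `G₀ ⊴ G`, `H ≤ G` with `G = G₀H`, and set
`H₀ = H ∩ G₀`. If for a prime `r` the number of `G₀`-classes of elements of
order `r` in `G₀` exceeds the number of `H₀`-classes of elements of order `r`
in `H₀`, then some `y ∈ G₀` of order `r` satisfies `y^G ∩ H = ∅`. -/
theorem stmt_12 {G : Type*} [Group G] [Finite G]
    (G₀ H : Subgroup G) [G₀.Normal]
    (hfact : (G₀ : Set G) * (H : Set G) = Set.univ)
    (r : ℕ) (hr : r.Prime)
    (hcount : (ConjClasses.mk '' {g : ↥G₀ | orderOf g = r}).ncard >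
      (ConjClasses.mk '' {g : ↥(H ⊓ G₀) | orderOf g = r}).ncard) :
    ∃ y : G, y ∈ G₀ ∧ orderOf y = r ∧ ∀ g : G, g * y * g⁻¹ ∉ H :=
  stmt_12_general G₀ H hfact r hcount
end

section
/- Let q = p^f ≥ 4 be a prime power, G = PSL₂(q), and H ≤ G a subgroup. Let r ≠ p be an odd prime dividing |H|, and let x ∈ G have order r. Then the conjugacy class x^G meets H. -/
open Matrix Polynomial Pointwise

section Helpers

variable {K : Type*} [Field K]

lemma commute_mem_span {a b : Matrix (Fin 2) (Fin 2) K}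
    (hns : ∀ α : K, a ≠ α • (1 : Matrix (Fin 2) (Fin 2) K))
    (h : a * b = b * a) : ∃ α β : K, b = α • 1 + β • a := by
  have E : ∀ i j, (a * b) i j = (b * a) i j := fun i j => by rw [h]
  have E00 := E 0 0; have E01 := E 0 1; have E10 := E 1 0; have E11 := E 1 1
  simp only [Matrix.mul_apply, Fin.sum_univ_two] at E00 E01 E10 E11
  by_cases h01 : a 0 1 ≠ 0
  · refine ⟨b 0 0 - (b 0 1 / a 0 1) * a 0 0, b 0 1 / a 0 1, ?_⟩
    ext i j
    fin_cases i <;> fin_cases j <;>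
      simp only [Matrix.add_apply, Matrix.smul_apply, Matrix.one_apply, smul_eq_mul,
        Fin.zero_eta, Fin.mk_one, Fin.isValue, if_true, if_false, reduceIte, mul_one,
          one_ne_zero, zero_ne_one,
        mul_zero, add_zero, zero_add] <;>
      field_simp
    · ring
    · linear_combination E00
    · linear_combination E01
  · push_neg at h01
    by_cases h10 : a 1 0 ≠ 0
    · refine ⟨b 0 0 - (b 1 0 / a 1 0) * a 0 0, b 1 0 / a 1 0, ?_⟩
      ext i j
      fin_cases i <;> fin_cases j <;>
        simp only [Matrix.add_apply, Matrix.smul_apply, Matrix.one_apply, smul_eq_mul,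
          Fin.zero_eta, Fin.mk_one, Fin.isValue, if_true, if_false, reduceIte, mul_one,
          one_ne_zero, zero_ne_one,
          mul_zero, add_zero, zero_add] <;>
        field_simp
      · ring
      · linear_combination -E00
      · linear_combination -E10
    · push_neg at h10
      have hd : a 0 0 ≠ a 1 1 := by
        intro hdd
        apply hns (a 0 0)
        ext i j
        fin_cases i <;> fin_cases j <;>
          simp [Matrix.smul_apply, Matrix.one_apply, h01, h10, hdd]
      have hsub : a 0 0 - a 1 1 ≠ 0 := sub_ne_zero.mpr hd
      simp only [h01, h10, mul_zero, zero_mul, add_zero, zero_add] at E01 E10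
      have hb01 : b 0 1 = 0 := by
        have h' : b 0 1 * (a 0 0 - a 1 1) = 0 := by linear_combination E01
        exact (mul_eq_zero.mp h').resolve_right hsub
      have hb10 : b 1 0 = 0 := by
        have h' : b 1 0 * (a 0 0 - a 1 1) = 0 := by linear_combination -E10
        exact (mul_eq_zero.mp h').resolve_right hsub
      refine ⟨b 0 0 - ((b 0 0 - b 1 1) / (a 0 0 - a 1 1)) * a 0 0,
        (b 0 0 - b 1 1) / (a 0 0 - a 1 1), ?_⟩
      ext i j
      fin_cases i <;> fin_cases j <;>
        simp only [Matrix.add_apply, Matrix.smul_apply, Matrix.one_apply, smul_eq_mul,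
          Fin.zero_eta, Fin.mk_one, Fin.isValue, if_true, if_false, reduceIte, mul_one,
          one_ne_zero, zero_ne_one,
          mul_zero, add_zero, zero_add] <;>
        field_simp [hb01, hb10, h01, h10] <;>
        grind

lemma idem_pow {e e' : Matrix (Fin 2) (Fin 2) K} (h1 : e + e' = 1)
    (h0 : e * e' = 0) (h0' : e' * e = 0) (x y : K) :
    ∀ n : ℕ, (x • e + y • e') ^ n = x ^ n • e + y ^ n • e'
  | 0 => by simpa using h1.symm
  | n + 1 => by
    have hee : e * e = e := by
      have h2 : e * (e + e') = e * 1 := by rw [h1]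
      simpa [mul_add, h0] using h2
    have hee' : e' * e' = e' := by
      have h2 : e' * (e + e') = e' * 1 := by rw [h1]
      simpa [mul_add, h0'] using h2
    rw [pow_succ, idem_pow h1 h0 h0' x y n]
    simp only [mul_add, add_mul, smul_mul_assoc, mul_smul_comm, smul_smul, hee, hee', h0, h0',
      smul_zero, add_zero, zero_add]
    rw [← pow_succ', ← pow_succ']

lemma nil_pow {u : Matrix (Fin 2) (Fin 2) K} (hu : u * u = 0) (l : K) :
    ∀ m : ℕ, (l • 1 + u) ^ (m + 1) = l ^ (m + 1) • 1 + ((m + 1 : K) * l ^ m) • u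
  | 0 => by simp
  | m + 1 => by
    rw [pow_succ, nil_pow hu l m]
    simp only [mul_add, add_mul, smul_mul_assoc, mul_smul_comm, smul_smul, hu,
      mul_one, one_mul, smul_zero, add_zero, zero_add]
    push_cast
    simp only [smul_add, smul_smul]
    module

lemma cayley2 {a : Matrix (Fin 2) (Fin 2) K} (hdet : a.det = 1) :
    a * a = (a 0 0 + a 1 1) • a - 1 := by
  rw [Matrix.det_fin_two] at hdet
  ext i j
  fin_cases i <;> fin_cases j <;>
    simp [Matrix.mul_apply, Fin.sum_univ_two, Matrix.one_fin_two] <;>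
    first
      | ring1
      | linear_combination -hdet
      | linear_combination hdet
      | linear_combination (-2 : K) * hdet
      | linear_combination (2 : K) * hdet

lemma det_comb {a : Matrix (Fin 2) (Fin 2) K} (α β : K) :
    (α • 1 + β • a).det = α ^ 2 + α * β * (a 0 0 + a 1 1) + β ^ 2 * a.det := by
  simp only [Matrix.det_fin_two, Matrix.add_apply, Matrix.smul_apply, Matrix.one_apply,
    smul_eq_mul, Fin.isValue, one_ne_zero, zero_ne_one, if_true, if_false, reduceIte,
    mul_one, mul_zero, add_zero, zero_add]
  ring

lemma root_mem_pows {r : ℕ} (hr : r.Prime) {l v : K} (hl : l ^ r = 1) (hl1 : l ≠ 1)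
    (hv : v ^ r = 1) : ∃ k, v = l ^ k := by
  classical
  haveI : Fact r.Prime := ⟨hr⟩
  have hord : orderOf l = r := orderOf_eq_prime hl hl1
  set S : Finset K := (Finset.range r).image (l ^ ·) with hS
  have hcard : S.card = r := by
    rw [hS, Finset.card_image_of_injOn, Finset.card_range]
    intro i hi j hj hij
    exact pow_injOn_Iio_orderOf (by simpa [hord] using Finset.mem_range.mp hi)
      (by simpa [hord] using Finset.mem_range.mp hj) hij
  have hrpos : 0 < r := hr.pos
  set P : K[X] := X ^ r - C 1 with hP
  have hPne : P ≠ 0 := X_pow_sub_C_ne_zero hrpos 1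
  have hSsub : S ⊆ P.roots.toFinset := by
    intro s hs
    obtain ⟨k, _, rfl⟩ := Finset.mem_image.mp hs
    rw [Multiset.mem_toFinset, mem_roots hPne]
    have hlk : (l ^ k) ^ r = 1 := by rw [← pow_mul, mul_comm k r, pow_mul, hl, one_pow]
    simp [hP, hlk]
  have hcard2 : P.roots.toFinset.card ≤ r := by
    calc P.roots.toFinset.card ≤ Multiset.card P.roots := P.roots.toFinset_card_le
    _ ≤ P.natDegree := P.card_roots'
    _ = r := by rw [hP, natDegree_X_pow_sub_C]
  have hEq : S = P.roots.toFinset := Finset.eq_of_subset_of_card_le hSsub (by omega)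
  have hvS : v ∈ S := by
    rw [hEq, Multiset.mem_toFinset, mem_roots hPne]
    simp [hP, hv]
  obtain ⟨k, _, hk⟩ := Finset.mem_image.mp hvS
  exact ⟨k, hk.symm⟩

lemma SL2_commute_pow [IsAlgClosed K] {r : ℕ} (hr : r.Prime)
    (hodd : Odd r) (hrK : (r : K) ≠ 0)
    {A B : Matrix.SpecialLinearGroup (Fin 2) K}
    (hcomm : A * B = B * A) (hA : A ^ r = 1) (hB : B ^ r = 1) (hA1 : A ≠ 1) :
    ∃ k : ℕ, B = A ^ k := by
  set a : Matrix (Fin 2) (Fin 2) K := ↑A with ha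
  set b : Matrix (Fin 2) (Fin 2) K := ↑B with hbdef
  have hdeta : a.det = 1 := A.2
  have hdetb : b.det = 1 := B.2
  have hcm : a * b = b * a := by
    have h := congrArg (fun M : Matrix.SpecialLinearGroup (Fin 2) K => (M : Matrix (Fin 2) (Fin 2) K)) hcomm
    simpa using h
  have hAr : a ^ r = 1 := by
    have h := congrArg (fun M : Matrix.SpecialLinearGroup (Fin 2) K => (M : Matrix (Fin 2) (Fin 2) K)) hA
    simpa using h
  have hBr : b ^ r = 1 := by
    have h := congrArg (fun M : Matrix.SpecialLinearGroup (Fin 2) K => (M : Matrix (Fin 2) (Fin 2) K)) hB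
    simpa using h
  obtain ⟨s, hs⟩ : ∃ s, r = s + 1 := ⟨r - 1, (Nat.succ_pred_eq_of_pos hr.pos).symm⟩
  -- a is not scalar
  have hns : ∀ α : K, a ≠ α • 1 := by
    intro α hα
    have hα2 : α ^ 2 = 1 := by
      have h := hdeta
      rw [hα, Matrix.det_smul, det_one, mul_one, Fintype.card_fin] at h
      exact h
    have hαr : α ^ r = 1 := by
      have h := hAr
      rw [hα, _root_.smul_pow, one_pow] at h
      have h00 := congrArg (fun M : Matrix (Fin 2) (Fin 2) K => M 0 0) h
      simpa using h00
    obtain ⟨m, hm⟩ := hodd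
    have hα1 : α = 1 := by
      have : α ^ r = (α ^ 2) ^ m * α := by rw [hm]; ring
      rw [hαr, hα2, one_pow, one_mul] at this
      exact this.symm
    exact hA1 (Subtype.ext (by rw [← ha, hα, hα1, one_smul]; rfl))
  -- eigenvalues
  set t : K := a 0 0 + a 1 1 with ht
  obtain ⟨l, hlroot⟩ := IsAlgClosed.exists_root (X ^ 2 - C t * X + C 1 : K[X]) (by
    have : (X ^ 2 - C t * X + C 1 : K[X]).degree = 2 := by compute_degree!
    rw [this]; norm_num)
  have hl : l ^ 2 - t * l + 1 = 0 := by simpa [Polynomial.IsRoot] using hlroot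
  have hl0 : l ≠ 0 := by intro h; rw [h] at hl; simp at hl
  set m : K := t - l with hm
  have hlm : l * m = 1 := by rw [hm]; linear_combination -hl
  have hsum : l + m = t := by rw [hm]; ring
  have hCH : a * a = t • a - 1 := cayley2 hdeta
  have expand : ∀ x y : K, (a - x • 1) * (a - y • 1) = a * a - (x + y) • a + (x * y) • 1 := by
    intro x y
    simp only [sub_mul, mul_sub, smul_mul_assoc, mul_smul_comm, smul_smul, one_mul, mul_one]
    module
  have hfac : (a - l • 1) * (a - m • 1) = 0 := by
    rw [expand, hCH, hsum, hlm, one_smul]; abel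
  have hfac' : (a - m • 1) * (a - l • 1) = 0 := by
    rw [expand, hCH, add_comm m l, hsum, mul_comm m l, hlm, one_smul]; abel
  by_cases hlm2 : l = m
  · exfalso
    set u : Matrix (Fin 2) (Fin 2) K := a - l • 1 with hu
    have huu : u * u = 0 := by
      have := hfac
      rw [← hlm2] at this
      exact this
    have hal : (l • 1 + u : Matrix (Fin 2) (Fin 2) K) = a := by rw [hu]; abel
    have hpow := nil_pow huu l s
    rw [hal, ← hs, hAr] at hpow
    have hc : ((s + 1 : K) * l ^ s) • u = (1 - l ^ r) • (1 : Matrix (Fin 2) (Fin 2) K) := by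
      rw [sub_smul, one_smul, eq_sub_iff_add_eq, add_comm]
      exact hpow.symm
    have hsq : ((1 - l ^ r) ^ 2) • (1 : Matrix (Fin 2) (Fin 2) K) = 0 := by
      have h2 : (((s + 1 : K) * l ^ s) • u) * (((s + 1 : K) * l ^ s) • u)
          = (((s + 1 : K) * l ^ s) * ((s + 1 : K) * l ^ s)) • (u * u) := by
        rw [smul_mul_assoc, mul_smul_comm, smul_smul]
      rw [hc] at h2
      rw [huu, smul_zero] at h2
      calc ((1 - l ^ r) ^ 2) • (1 : Matrix (Fin 2) (Fin 2) K)
          = ((1 - l ^ r) • (1 : Matrix (Fin 2) (Fin 2) K)) * ((1 - l ^ r) • 1) := by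
            rw [smul_mul_assoc, mul_smul_comm, smul_smul, one_mul, sq]
        _ = 0 := h2
    have hlr : l ^ r = 1 := by
      have h00 := congrArg (fun M : Matrix (Fin 2) (Fin 2) K => M 0 0) hsq
      simp only [Matrix.smul_apply, Matrix.one_apply_eq, smul_eq_mul, mul_one,
        Matrix.zero_apply] at h00
      have h2 := pow_eq_zero_iff (n := 2) (by norm_num) |>.mp h00
      rw [sub_eq_zero] at h2
      exact h2.symm
    have hcne : ((s + 1 : K) * l ^ s) ≠ 0 := by
      apply mul_ne_zero _ (pow_ne_zero _ hl0)
      have : ((s : K) + 1) = (r : K) := by rw [hs]; push_cast; ring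
      rw [this]; exact hrK
    have hu0 : u = 0 := by
      rw [hlr, sub_self, zero_smul] at hc
      rcases smul_eq_zero.mp hc with h | h
      · exact absurd h hcne
      · exact h
    exact hns l (by rw [← hal, hu0, add_zero])
  · have hd : l - m ≠ 0 := sub_ne_zero.mpr hlm2
    set e : Matrix (Fin 2) (Fin 2) K := (l - m)⁻¹ • (a - m • 1) with he
    set e' : Matrix (Fin 2) (Fin 2) K := (l - m)⁻¹ • (l • 1 - a) with he'
    have h1 : e + e' = 1 := by
      rw [he, he', ← smul_add]
      have h2 : (a - m • 1) + (l • (1 : Matrix (Fin 2) (Fin 2) K) - a) = (l - m) • 1 := by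
        module
      rw [h2, smul_smul, inv_mul_cancel₀ hd, one_smul]
    have h0 : e * e' = 0 := by
      rw [he, he', smul_mul_assoc, mul_smul_comm, smul_smul]
      rw [show (l • (1 : Matrix (Fin 2) (Fin 2) K) - a) = -(a - l • 1) by abel]
      rw [mul_neg, hfac', neg_zero, smul_zero]
    have h0' : e' * e = 0 := by
      rw [he, he', smul_mul_assoc, mul_smul_comm, smul_smul]
      rw [show (l • (1 : Matrix (Fin 2) (Fin 2) K) - a) = -(a - l • 1) by abel]
      rw [neg_mul, hfac, neg_zero, smul_zero]
    have hae : a = l • e + m • e' := by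
      rw [he, he', smul_comm l, smul_comm m, ← smul_add]
      have h2 : l • (a - m • 1) + m • (l • (1 : Matrix (Fin 2) (Fin 2) K) - a) = (l - m) • a := by
        module
      rw [h2, smul_smul, inv_mul_cancel₀ hd, one_smul]
    have hee : e * e = e := by
      have h2 : e * (e + e') = e * 1 := by rw [h1]
      simpa [mul_add, h0] using h2
    have hene : e ≠ 0 := by
      intro h0e
      apply hns m
      rw [he] at h0e
      rcases smul_eq_zero.mp h0e with h | h
      · exact absurd h (inv_ne_zero hd)
      · rw [sub_eq_zero] at h; exact h
    -- b in span
    obtain ⟨α, β, hb⟩ := commute_mem_span hns hcm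
    set ν : K := α + β * l with hν
    set ν' : K := α + β * m with hν'
    have hbe : b = ν • e + ν' • e' := by
      rw [hb, show (α • 1 : Matrix (Fin 2) (Fin 2) K) = α • (e + e') by rw [h1], hae, hν, hν']
      module
    have hsmul_one : ∀ c : K, c • (1 : Matrix (Fin 2) (Fin 2) K) = 0 → c = 0 := by
      intro c hc0
      have h00 := congrArg (fun M : Matrix (Fin 2) (Fin 2) K => M 0 0) hc0
      simpa using h00
    have key : ∀ x y : K, x • e + y • e' = e + e' → x = 1 := by
      intro x y hxy
      have h2 : (x - 1) • e + (y - 1) • e' = 0 := by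
        rw [sub_smul, sub_smul, one_smul, one_smul]
        rw [show x • e - e + (y • e' - e') = (x • e + y • e') - (e + e') by abel, hxy, sub_self]
      have h3 : ((x - 1) • e + (y - 1) • e') * e = 0 := by rw [h2, zero_mul]
      rw [add_mul, smul_mul_assoc (x - 1) e e, smul_mul_assoc (y - 1) e' e, hee, h0',
        smul_zero, add_zero] at h3
      rcases smul_eq_zero.mp h3 with h | h
      · exact sub_eq_zero.mp h
      · exact absurd h hene
    have hlr : l ^ r = 1 := by
      have hpow := idem_pow h1 h0 h0' l m r
      rw [← hae, hAr, ← h1] at hpow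
      exact key _ _ hpow.symm
    have hνr : ν ^ r = 1 := by
      have hpow := idem_pow h1 h0 h0' ν ν' r
      rw [← hbe, hBr, ← h1] at hpow
      exact key _ _ hpow.symm
    have hl1 : l ≠ 1 := by
      intro hl1
      apply hlm2
      rw [hl1] at hlm ⊢
      rw [one_mul] at hlm
      exact hlm.symm
    have hνν' : ν * ν' = 1 := by
      have h2 := det_comb (a := a) α β
      rw [← hb, hdetb, hdeta, ← ht] at h2
      rw [hν, hν']
      linear_combination -h2 - β ^ 2 * hl
    obtain ⟨k, hk⟩ := root_mem_pows hr hlr hl1 hνr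
    have hν0 : ν ≠ 0 := fun h => by rw [h, zero_mul] at hνν'; exact one_ne_zero hνν'.symm
    have hmk : m ^ k = ν' := by
      have h2 : ν * m ^ k = 1 := by
        rw [hk, ← mul_pow, hlm, one_pow]
      exact mul_left_cancel₀ hν0 (h2.trans hνν'.symm)
    have hak : (a : Matrix (Fin 2) (Fin 2) K) ^ k = ν • e + ν' • e' := by
      have hpow := idem_pow h1 h0 h0' l m k
      rw [← hae, ← hk, hmk] at hpow
      exact hpow
    refine ⟨k, Subtype.ext ?_⟩
    rw [Matrix.SpecialLinearGroup.coe_pow]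
    rw [← ha, ← hbdef, hbe, hak]

end Helpers

/-- The projective special linear group `PSL₂(F)`. -/
abbrev PSL2 (F : Type*) [Field F] :=
  Matrix.SpecialLinearGroup (Fin 2) F ⧸
    Subgroup.center (Matrix.SpecialLinearGroup (Fin 2) F)

lemma PSL2_comm_pow {F : Type*} [Field F] {p : ℕ} [Fact p.Prime] [CharP F p]
    {r : ℕ} (hr : r.Prime) (hodd : Odd r) (hrp : r ≠ p)
    {a b : PSL2 F} (hcomm : a * b = b * a) (har : a ^ r = 1) (hbr : b ^ r = 1) (ha1 : a ≠ 1) :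
    ∃ k : ℕ, b = a ^ k := by
  have hc2 : ∀ c ∈ Subgroup.center (Matrix.SpecialLinearGroup (Fin 2) F), c ^ 2 = 1 := by
    intro c hc
    obtain ⟨ρ, hρ2, hρ⟩ := Matrix.SpecialLinearGroup.mem_center_iff.mp hc
    have hρ2' : ρ ^ 2 = 1 := by simpa using hρ2
    apply Subtype.ext
    rw [Matrix.SpecialLinearGroup.coe_pow, ← hρ, ← _root_.map_pow, hρ2', _root_.map_one,
      Matrix.SpecialLinearGroup.coe_one]
  obtain ⟨n, hn⟩ := hodd
  obtain ⟨A₀, hA₀⟩ := QuotientGroup.mk_surjective a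
  obtain ⟨B₀, hB₀⟩ := QuotientGroup.mk_surjective b
  set A := A₀ ^ (r + 1) with hA
  set B := B₀ ^ (r + 1) with hB
  have hπA : ((A : Matrix.SpecialLinearGroup (Fin 2) F) : PSL2 F) = a := by
    rw [hA, QuotientGroup.mk_pow, hA₀, pow_succ, har, one_mul]
  have hπB : ((B : Matrix.SpecialLinearGroup (Fin 2) F) : PSL2 F) = b := by
    rw [hB, QuotientGroup.mk_pow, hB₀, pow_succ, hbr, one_mul]
  have hA₀r : A₀ ^ r ∈ Subgroup.center (Matrix.SpecialLinearGroup (Fin 2) F) := by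
    rw [← QuotientGroup.eq_one_iff, QuotientGroup.mk_pow, hA₀, har]
  have hB₀r : B₀ ^ r ∈ Subgroup.center (Matrix.SpecialLinearGroup (Fin 2) F) := by
    rw [← QuotientGroup.eq_one_iff, QuotientGroup.mk_pow, hB₀, hbr]
  have hAr : A ^ r = 1 := by
    rw [hA, ← pow_mul, mul_comm, pow_mul, show r + 1 = 2 * (n + 1) by omega, pow_mul,
      hc2 _ hA₀r, one_pow]
  have hBr : B ^ r = 1 := by
    rw [hB, ← pow_mul, mul_comm, pow_mul, show r + 1 = 2 * (n + 1) by omega, pow_mul,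
      hc2 _ hB₀r, one_pow]
  have hcommAB : A * B = B * A := by
    set z := A * B * A⁻¹ * B⁻¹ with hz
    have hzN : z ∈ Subgroup.center (Matrix.SpecialLinearGroup (Fin 2) F) := by
      rw [← QuotientGroup.eq_one_iff, hz]
      simp only [QuotientGroup.mk_mul, QuotientGroup.mk_inv, hπA, hπB]
      rw [hcomm]
      group
    have hz2 : z ^ 2 = 1 := hc2 z hzN
    have hcommzB : Commute z B := (Subgroup.mem_center_iff.mp hzN B).symm
    have h1 : (A * B * A⁻¹) ^ r = 1 := by rw [conj_pow, hBr, mul_one, mul_inv_cancel]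
    have h2 : A * B * A⁻¹ = z * B := by rw [hz]; group
    rw [h2, hcommzB.mul_pow, hBr, mul_one] at h1
    have hzr : z ^ r = z := by
      rw [hn, pow_succ, pow_mul, hz2, one_pow, one_mul]
    have hz1 : z = 1 := by rw [← hzr, h1]
    have := hz
    rw [hz1] at this
    have h3 : (1 : Matrix.SpecialLinearGroup (Fin 2) F) * (B * A) = A * B := by
      rw [this]; group
    rw [one_mul] at h3
    exact h3.symm
  -- move to the algebraic closure
  set K := AlgebraicClosure F with hK
  haveI : CharP K p := charP_of_injective_algebraMap (algebraMap F K).injective p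
  have hrK : (r : K) ≠ 0 := by
    rw [Ne, CharP.cast_eq_zero_iff K p]
    intro hdvd
    exact hrp ((Nat.prime_dvd_prime_iff_eq (Fact.out) hr).mp hdvd).symm
  set ι := Matrix.SpecialLinearGroup.map (n := Fin 2) (algebraMap F K) with hι
  have hinj : Function.Injective ι := by
    intro X Y hXY
    apply Subtype.ext
    ext i j
    have h := congrArg (fun M : Matrix.SpecialLinearGroup (Fin 2) K =>
      (M : Matrix (Fin 2) (Fin 2) K) i j) hXY
    simp only [hι, Matrix.SpecialLinearGroup.map_apply_coe, RingHom.mapMatrix_apply,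
      Matrix.map_apply] at h
    exact (algebraMap F K).injective h
  have hA1 : A ≠ 1 := by
    intro h
    apply ha1
    rw [← hπA, h, QuotientGroup.mk_one]
  have hιA1 : ι A ≠ 1 := fun h => hA1 (hinj (by rw [h, _root_.map_one]))
  obtain ⟨k, hk⟩ := SL2_commute_pow hr ⟨n, hn⟩ hrK (A := ι A) (B := ι B)
    (by rw [← _root_.map_mul, ← _root_.map_mul, hcommAB])
    (by rw [← _root_.map_pow, hAr, _root_.map_one])
    (by rw [← _root_.map_pow, hBr, _root_.map_one]) hιA1
  have hBA : B = A ^ k := hinj (by simp only [hk, _root_.map_pow])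
  exact ⟨k, by rw [← hπB, ← hπA, ← QuotientGroup.mk_pow, hBA]⟩

/-- Let `q = p^f ≥ 4` be a prime power, `G = PSL₂(q)` and `H ≤ G`. If
`r ≠ p` is an odd prime dividing `|H|` and `x ∈ G` has order `r`, then the
conjugacy class of `x` meets `H`. -/
theorem stmt_13 (p f : ℕ) [Fact p.Prime] (hf : 1 ≤ f) (hq : 4 ≤ p ^ f)
    (H : Subgroup (PSL2 (GaloisField p f)))
    (r : ℕ) (hr : r.Prime) (hodd : Odd r) (hrp : r ≠ p)
    (hdvd : r ∣ Nat.card H)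
    (x : PSL2 (GaloisField p f)) (hx : orderOf x = r) :
    ∃ y ∈ H, IsConj x y := by
  haveI : Fact r.Prime := ⟨hr⟩
  -- Cauchy: H has an element of order r
  obtain ⟨z₀, hz₀⟩ := exists_prime_orderOf_dvd_card' (G := H) r hdvd
  set z : PSL2 (GaloisField p f) := (z₀ : PSL2 (GaloisField p f)) with hzdef
  have hzH : z ∈ H := SetLike.coe_mem z₀
  have hz : orderOf z = r := by
    rw [← hz₀]
    exact orderOf_injective H.subtype Subtype.coe_injective z₀
  have hx1 : x ≠ 1 := fun h => hr.one_lt.ne' (by rw [h, orderOf_one] at hx; exact hx.symm)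
  have hz1 : z ≠ 1 := fun h => hr.one_lt.ne' (by rw [h, orderOf_one] at hz; exact hz.symm)
  -- Sylow subgroups containing x and z
  have hPx : IsPGroup r (Subgroup.zpowers x) :=
    IsPGroup.of_card (n := 1) (by rw [Nat.card_zpowers, hx, pow_one])
  obtain ⟨P, hxP⟩ := hPx.exists_le_sylow
  have hPz : IsPGroup r (Subgroup.zpowers z) :=
    IsPGroup.of_card (n := 1) (by rw [Nat.card_zpowers, hz, pow_one])
  obtain ⟨Q, hzQ⟩ := hPz.exists_le_sylow
  haveI : Finite (Sylow r (PSL2 (GaloisField p f))) := by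
    apply Finite.of_injective
      (fun P : Sylow r (PSL2 (GaloisField p f)) => (P : Subgroup (PSL2 (GaloisField p f))))
    intro P Q h
    exact Sylow.ext h
  obtain ⟨g, hg⟩ := MulAction.exists_smul_eq (PSL2 (GaloisField p f)) P Q
  -- a central element of order r in P
  have hxP' : x ∈ P := hxP (Subgroup.mem_zpowers x)
  haveI : Nontrivial ↥(P : Subgroup (PSL2 (GaloisField p f))) :=
    nontrivial_of_ne ⟨x, hxP'⟩ 1 (fun h => hx1 (by simpa using congrArg Subtype.val h))
  have hPr : IsPGroup r ↥(P : Subgroup (PSL2 (GaloisField p f))) := P.isPGroup'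
  haveI := hPr.center_nontrivial
  have hZcard : Nat.card ↥(Subgroup.center ↥(P : Subgroup (PSL2 (GaloisField p f)))) ∣
      Nat.card ↥(P : Subgroup (PSL2 (GaloisField p f))) :=
    Subgroup.card_subgroup_dvd_card _
  obtain ⟨nP, hnP⟩ := hPr.exists_card_eq
  rw [hnP] at hZcard
  obtain ⟨lZ, hlZ, hZeq⟩ := (Nat.dvd_prime_pow hr).mp hZcard
  have hrZ : r ∣ Nat.card ↥(Subgroup.center ↥(P : Subgroup (PSL2 (GaloisField p f)))) := by
    rcases Nat.eq_zero_or_pos lZ with h0 | h0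
    · exfalso
      rw [h0, pow_zero] at hZeq
      exact (Finite.one_lt_card_iff_nontrivial.mpr inferInstance).ne' hZeq
    · rw [hZeq]
      exact dvd_pow_self r h0.ne'
  obtain ⟨c₀, hc₀⟩ := exists_prime_orderOf_dvd_card'
    (G := ↥(Subgroup.center ↥(P : Subgroup (PSL2 (GaloisField p f))))) r hrZ
  set cP : ↥(P : Subgroup (PSL2 (GaloisField p f))) := c₀.val with hcPdef
  have hcP : orderOf cP = r :=
    (orderOf_injective (Subgroup.center _).subtype Subtype.coe_injective c₀).trans hc₀
  set cG : PSL2 (GaloisField p f) := (cP : PSL2 (GaloisField p f)) with hcGdef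
  have hcG : orderOf cG = r :=
    (orderOf_injective (P : Subgroup (PSL2 (GaloisField p f))).subtype
      Subtype.coe_injective cP).trans hcP
  have hcG1 : cG ≠ 1 := fun h => hr.one_lt.ne' (by rw [h, orderOf_one] at hcG; exact hcG.symm)
  have hcGr : cG ^ r = 1 := by rw [← hcG]; exact pow_orderOf_eq_one cG
  have hcenter : ∀ w : ↥(P : Subgroup (PSL2 (GaloisField p f))), w * cP = cP * w :=
    fun w => Subgroup.mem_center_iff.mp (SetLike.coe_mem c₀) w
  -- x is a power of cG
  have hcomm_x : cG * x = x * cG := by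
    have h := hcenter ⟨x, hxP'⟩
    exact (congrArg Subtype.val h).symm
  obtain ⟨k, hk⟩ := PSL2_comm_pow (p := p) hr hodd hrp hcomm_x hcGr
    (by rw [← hx]; exact pow_orderOf_eq_one x) hcG1
  have hxmem : x ∈ Subgroup.zpowers cG := by
    rw [Subgroup.mem_zpowers_iff]
    exact ⟨(k : ℤ), by rw [zpow_natCast]; exact hk.symm⟩
  have hzp1 : Subgroup.zpowers x = Subgroup.zpowers cG :=
    Subgroup.eq_of_le_of_card_ge (Subgroup.zpowers_le.mpr hxmem)
      (by rw [Nat.card_zpowers, Nat.card_zpowers, hx, hcG])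
  -- the conjugate u of z lies in P
  set u : PSL2 (GaloisField p f) := g⁻¹ * z * g with hudef
  have huP : u ∈ P := by
    have hzQ' : z ∈ Q := hzQ (Subgroup.mem_zpowers z)
    rw [← hg] at hzQ'
    have : z ∈ MulAut.conj g • (P : Subgroup (PSL2 (GaloisField p f))) := hzQ'
    rw [Subgroup.mem_pointwise_smul_iff_inv_smul_mem] at this
    show u ∈ (P : Subgroup (PSL2 (GaloisField p f)))
    simpa [hudef, mul_assoc] using this
  have hcomm_u : cG * u = u * cG := by
    have h := hcenter ⟨u, huP⟩
    exact (congrArg Subtype.val h).symm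
  have hue : u = g⁻¹ * z * (g⁻¹)⁻¹ := by rw [inv_inv]
  have hur : u ^ r = 1 := by
    rw [hue, conj_pow, ← hz, pow_orderOf_eq_one, mul_one, mul_inv_cancel]
  obtain ⟨k2, hk2⟩ := PSL2_comm_pow (p := p) hr hodd hrp hcomm_u hcGr hur hcG1
  have humem : u ∈ Subgroup.zpowers cG := by
    rw [Subgroup.mem_zpowers_iff]
    exact ⟨(k2 : ℤ), by rw [zpow_natCast]; exact hk2.symm⟩
  have huord : orderOf u = r := by
    rw [hue, ← MulAut.conj_apply, ← MulEquiv.coe_toMonoidHom]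
    rw [orderOf_injective _ (MulAut.conj g⁻¹).injective z]
    exact hz
  have hzp2 : Subgroup.zpowers u = Subgroup.zpowers cG :=
    Subgroup.eq_of_le_of_card_ge (Subgroup.zpowers_le.mpr humem)
      (by rw [Nat.card_zpowers, Nat.card_zpowers, huord, hcG])
  have hxmem2 : x ∈ Subgroup.zpowers u := by
    rw [hzp2]
    exact hxmem
  obtain ⟨j, hj⟩ := hxmem2
  refine ⟨z ^ j, H.zpow_mem hzH j, ?_⟩
  rw [isConj_iff]
  refine ⟨g, ?_⟩
  have hxj : x = g⁻¹ * z ^ j * g := by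
    rw [← hj, hue]
    show (g⁻¹ * z * g⁻¹⁻¹) ^ j = g⁻¹ * z ^ j * g
    rw [conj_zpow, inv_inv]
  rw [hxj]
  group
end

section
/- Suppose x = p^{f/2} for a prime p, r = 2^m + 1 is a Fermat prime with m ≥ 2 a power of 2, and z ∈ {1, 2} satisfy x² + 1 = 2r^z. Then (x, r, z) = (3, 5, 1) or (7, 5, 2). -/
/-- If `x = p^(f/2)` is a power of a prime `p`, `r = 2^m + 1` is a Fermat
prime with `m ≥ 2` a power of 2, `x² + 1 = 2·r^z` and `z ∈ {1, 2}`, then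
`(x, r, z) = (3, 5, 1)` or `(7, 5, 2)`. -/
theorem stmt_15 (x r z m p f : ℕ) (hp : p.Prime) (hr : r.Prime)
    (hrm : r = 2 ^ m + 1) (hm2 : 2 ≤ m) (hmpow : ∃ j : ℕ, m = 2 ^ j)
    (hx : x = p ^ (f / 2)) (heq : x ^ 2 + 1 = 2 * r ^ z)
    (hz : z = 1 ∨ z = 2) :
    (x = 3 ∧ r = 5 ∧ z = 1) ∨ (x = 7 ∧ r = 5 ∧ z = 2) := by
  clear hx hp hmpow hr
  subst hrm
  obtain ⟨k, hk⟩ : ∃ k, m = k + 2 := ⟨m - 2, by omega⟩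
  subst hk
  -- x is odd
  have hxodd : x % 2 = 1 := by
    have h1 : (x ^ 2 + 1) % 2 = 0 := by rw [heq]; simp [Nat.mul_mod_right]
    have h2 : x ^ 2 % 2 = x % 2 := by
      rw [pow_two, Nat.mul_mod]
      rcases Nat.mod_two_eq_zero_or_one x with h | h <;> simp [h]
    omega
  obtain ⟨y, hy⟩ : ∃ y, x = 2 * y + 1 := ⟨x / 2, by omega⟩
  subst hy
  have ha1 : 1 ≤ 2 ^ k := Nat.one_le_two_pow
  rcases hz with hz | hz <;> subst hz
  · -- z = 1 : y * (y + 1) = 2 * 2^k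
    have h : y * (y + 1) = 2 ^ k * 2 := by
      have e1 : (2 * y + 1) ^ 2 = 4 * (y * (y + 1)) + 1 := by ring
      have e2 : (2 : ℕ) ^ (k + 2) = 4 * 2 ^ k := by ring
      linarith [heq]
    rcases Nat.even_or_odd y with he | ho
    · -- y even : 2^(k+1) divides y, too big
      exfalso
      have hcop : Nat.Coprime (2 ^ k * 2) (y + 1) := by
        have : Odd (y + 1) := Even.add_one he
        exact Nat.Coprime.mul ((Nat.coprime_two_left.mpr this).pow_left k)
          (Nat.coprime_two_left.mpr this)
      have hdvd : 2 ^ k * 2 ∣ y := hcop.dvd_of_dvd_mul_right ⟨1, by omega⟩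
      have hge : 2 ^ k * 2 ≤ y := Nat.le_of_dvd (by nlinarith) hdvd
      nlinarith [Nat.mul_le_mul hge (Nat.le_refl (y + 1))]
    · -- y odd : 2^(k+1) divides y + 1, so y = 1
      have hcop : Nat.Coprime (2 ^ k * 2) y := by
        exact Nat.Coprime.mul ((Nat.coprime_two_left.mpr ho).pow_left k)
          (Nat.coprime_two_left.mpr ho)
      have hdvd : 2 ^ k * 2 ∣ y + 1 := hcop.dvd_of_dvd_mul_left ⟨1, by omega⟩
      have hge : 2 ^ k * 2 ≤ y + 1 := Nat.le_of_dvd (by omega) hdvd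
      have hy1 : y = 1 := by nlinarith [Nat.mul_le_mul (Nat.le_refl y) hge]
      have hk0 : 2 ^ k = 1 := by omega
      have : k = 0 := by
        by_contra hne
        have : 2 ≤ 2 ^ k := by
          calc 2 = 2 ^ 1 := rfl
          _ ≤ 2 ^ k := Nat.pow_le_pow_right (by norm_num) (by omega)
        omega
      subst this
      left; refine ⟨by omega, by norm_num, rfl⟩
  · -- z = 2 : y * (y + 1) = 2^(k+2) * (2^(k+1) + 1)
    have h : y * (y + 1) = (2 ^ k * 4) * (2 ^ k * 2 + 1) := by
      have e1 : (2 * y + 1) ^ 2 = 4 * (y * (y + 1)) + 1 := by ring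
      have e2 : (2 : ℕ) ^ (k + 2) = 4 * 2 ^ k := by ring
      have e3 : ((2 : ℕ) ^ (k + 2) + 1) ^ 2 =
          2 * ((2 ^ k * 4) * (2 ^ k * 2 + 1)) + 1 := by ring
      linarith [heq]
    rcases Nat.even_or_odd y with he | ho
    · -- y even : 2^(k+2) ∣ y, contradiction
      exfalso
      have hcop : Nat.Coprime (2 ^ k * 4) (y + 1) := by
        have hodd : Odd (y + 1) := Even.add_one he
        have h2 : Nat.Coprime 2 (y + 1) := Nat.coprime_two_left.mpr hodd
        have h4 : Nat.Coprime 4 (y + 1) := by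
          have := h2.mul h2
          simpa using this
        exact Nat.Coprime.mul (h2.pow_left k) h4
      have hdvd : 2 ^ k * 4 ∣ y := hcop.dvd_of_dvd_mul_right ⟨2 ^ k * 2 + 1, by omega⟩
      have hge : 2 ^ k * 4 ≤ y := Nat.le_of_dvd (by nlinarith) hdvd
      nlinarith [Nat.mul_le_mul hge (Nat.add_le_add_right hge 1)]
    · -- y odd : 2^(k+2) ∣ y + 1
      have hcop : Nat.Coprime (2 ^ k * 4) y := by
        have h2 : Nat.Coprime 2 y := Nat.coprime_two_left.mpr ho
        have h4 : Nat.Coprime 4 y := by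
          have := h2.mul h2
          simpa using this
        exact Nat.Coprime.mul (h2.pow_left k) h4
      have hdvd : 2 ^ k * 4 ∣ y + 1 := hcop.dvd_of_dvd_mul_left ⟨2 ^ k * 2 + 1, by omega⟩
      have hge : 2 ^ k * 4 ≤ y + 1 := Nat.le_of_dvd (by omega) hdvd
      have hk0 : 2 ^ k = 1 := by
        by_contra hne
        have ha2 : 2 ≤ 2 ^ k := by omega
        have hy2 : 2 ^ k * 2 + 2 ≤ y := by omega
        nlinarith [Nat.mul_le_mul hy2 hge]
      have hk0' : k = 0 := by
        by_contra hne
        have : 2 ≤ 2 ^ k := by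
          calc 2 = 2 ^ 1 := rfl
          _ ≤ 2 ^ k := Nat.pow_le_pow_right (by norm_num) (by omega)
        omega
      subst hk0'
      -- y * (y + 1) = 12, y + 1 ≥ 4 ⟹ y = 3
      have h12 : y * (y + 1) = 12 := by omega
      have hy3 : y = 3 := by
        have hle : y ≤ 3 := by nlinarith
        interval_cases y <;> omega
      right; refine ⟨by omega, by norm_num, rfl⟩
end

section
/- Let G = PGL₂(p) where p = 2^m − 1 is a Mersenne prime with m ≥ 3, and let H = C_p : C_d ≤ G where d is a proper divisor of p − 1 such that d is even and every prime dividing p − 1 also divides d. Then in the action of G on the cosets of H, the index is |G : H| = 2^m · p · (p−1) / (p · d) = 2^m (p−1)/d, and the only derangements of prime order are involutions. -/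
/-- The projective general linear group `PGL₂(F)`. -/
abbrev PGL2 (F : Type*) [Field F] :=
  Matrix.GeneralLinearGroup (Fin 2) F ⧸
    Subgroup.center (Matrix.GeneralLinearGroup (Fin 2) F)


open Matrix Subgroup Pointwise Finset

theorem center_GL2_eq (F : Type*) [Field F] :
    Subgroup.center (GL (Fin 2) F) =
      (Units.map (Matrix.scalar (Fin 2) : F →+* Matrix (Fin 2) (Fin 2) F).toMonoidHom).range := by
  have hU : ∀ A : GL (Fin 2) F, A ∈ Subgroup.center (GL (Fin 2) F) →
      (A : Matrix (Fin 2) (Fin 2) F) 1 0 = 0 ∧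
      (A : Matrix (Fin 2) (Fin 2) F) 0 0 = (A : Matrix (Fin 2) (Fin 2) F) 1 1 := by
    intro A hA
    rw [Subgroup.mem_center_iff] at hA
    set U : GL (Fin 2) F := ⟨!![1,1;0,1], !![1,-1;0,1],
      by rw [Matrix.mul_fin_two]; norm_num; exact Matrix.one_fin_two.symm,
      by rw [Matrix.mul_fin_two]; norm_num; exact Matrix.one_fin_two.symm⟩ with hUdef
    have h := congrArg Units.val (hA U)
    simp only [Units.val_mul, hUdef] at h
    rw [Matrix.eta_fin_two (A : Matrix (Fin 2) (Fin 2) F), Matrix.mul_fin_two,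
      Matrix.mul_fin_two] at h
    rw [← Matrix.ext_iff] at h
    simp [Fin.forall_fin_two] at h
    constructor
    · exact h.1.1
    · linear_combination -h.1.2
  ext A
  constructor
  · intro hA
    obtain ⟨hc, had⟩ := hU A hA
    rw [Subgroup.mem_center_iff] at hA
    set L : GL (Fin 2) F := ⟨!![1,0;1,1], !![1,0;-1,1],
      by rw [Matrix.mul_fin_two]; norm_num; exact Matrix.one_fin_two.symm,
      by rw [Matrix.mul_fin_two]; norm_num; exact Matrix.one_fin_two.symm⟩ with hLdef
    have h := congrArg Units.val (hA L)
    simp only [Units.val_mul, hLdef] at h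
    rw [Matrix.eta_fin_two (A : Matrix (Fin 2) (Fin 2) F), Matrix.mul_fin_two,
      Matrix.mul_fin_two] at h
    rw [← Matrix.ext_iff] at h
    simp [Fin.forall_fin_two] at h
    have hb : (A : Matrix (Fin 2) (Fin 2) F) 0 1 = 0 := by exact h.1
    -- A = scalar a
    set a := (A : Matrix (Fin 2) (Fin 2) F) 0 0 with ha
    have hAval : (A : Matrix (Fin 2) (Fin 2) F) = Matrix.scalar (Fin 2) a := by
      rw [Matrix.eta_fin_two (A : Matrix (Fin 2) (Fin 2) F), hb, hc, ← had, ← ha]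
      ext i j
      fin_cases i <;> fin_cases j <;> simp [Matrix.scalar_apply, Matrix.diagonal]
    have hunit : IsUnit a := by
      have : IsUnit ((A : Matrix (Fin 2) (Fin 2) F).det) :=
        (Matrix.isUnit_iff_isUnit_det _).mp A.isUnit
      rw [Matrix.det_fin_two, hb, hc, ← had] at this
      simp at this
      exact isUnit_iff_ne_zero.mpr this.2
    refine ⟨hunit.unit, ?_⟩
    ext : 1
    simpa using hAval.symm
  · rintro ⟨u, rfl⟩
    rw [Subgroup.mem_center_iff]
    intro B
    ext : 1
    show (B : Matrix (Fin 2) (Fin 2) F) * Matrix.scalar (Fin 2) (u : F)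
      = Matrix.scalar (Fin 2) (u : F) * B
    rw [Matrix.scalar_commute] <;> intro r <;> exact mul_comm _ r

theorem mem_zpowers_of_pow_eq_one' {α : Type*} [Group α] [Finite α] [IsCyclic α] {r : ℕ}
    (hr : 0 < r) {a b : α} (ha : a ^ r = 1) (hb : orderOf b = r) :
    a ∈ Subgroup.zpowers b := by
  classical
  have := Fintype.ofFinite α
  have hle : #{x : α | x ^ r = 1} ≤ r := IsCyclic.card_pow_eq_one_le hr
  set S : Finset α := {x : α | x ^ r = 1} with hS
  set T : Finset α := Set.toFinset (Subgroup.zpowers b : Set α) with hT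
  have hsub : T ⊆ S := by
    intro x hx
    rw [hT, Set.mem_toFinset] at hx
    have hdvd : orderOf x ∣ r := hb ▸ orderOf_dvd_of_mem_zpowers hx
    simp only [hS, Finset.mem_filter, Finset.mem_univ, true_and, Set.mem_setOf_eq]
    exact orderOf_dvd_iff_pow_eq_one.mp hdvd
  have hcard : T.card = r := by
    rw [hT, Set.toFinset_card]
    rw [show ((Subgroup.zpowers b : Subgroup α) : Set α) = ((Subgroup.zpowers b : Subgroup α) : Set α) from rfl]
    rw [← hb, ← Fintype.card_zpowers]
    exact Fintype.card_congr (Equiv.refl _)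
  have heq : T = S := Finset.eq_of_subset_of_card_le hsub (by rw [hcard]; exact hle)
  have haS : a ∈ S := by
    simp only [hS, Finset.mem_filter, Finset.mem_univ, true_and, Set.mem_setOf_eq]
    exact ha
  rw [← heq, hT, Set.mem_toFinset] at haS
  exact haS

variable (F : Type*) [Field F]

def diagGL : Fˣ →* GL (Fin 2) F where
  toFun u := ⟨!![1,0;0,(u:F)], !![1,0;0,((u⁻¹:Fˣ):F)],
    by rw [Matrix.mul_fin_two]; norm_num; exact Matrix.one_fin_two.symm,
    by rw [Matrix.mul_fin_two]; norm_num; exact Matrix.one_fin_two.symm⟩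
  map_one' := by ext : 1; simpa using Matrix.one_fin_two.symm
  map_mul' u v := by
    ext : 1
    show (!![1,0;0,((u*v : Fˣ):F)] : Matrix (Fin 2) (Fin 2) F) = !![1,0;0,(u:F)] * !![1,0;0,(v:F)]
    rw [Matrix.mul_fin_two]; norm_num

def pglDiag : Fˣ →* PGL2 F := (QuotientGroup.mk' _).comp (diagGL F)

theorem center_GL2_eq' :
    Subgroup.center (GL (Fin 2) F) =
      (Units.map (Matrix.scalar (Fin 2) : F →+* Matrix (Fin 2) (Fin 2) F).toMonoidHom).range :=
  center_GL2_eq F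

theorem pglDiag_injective : Function.Injective (pglDiag F) := by
  rw [injective_iff_map_eq_one]
  intro u hu
  have : diagGL F u ∈ Subgroup.center (GL (Fin 2) F) := by
    rwa [pglDiag, MonoidHom.comp_apply, QuotientGroup.mk'_apply, QuotientGroup.eq_one_iff] at hu
  rw [center_GL2_eq'] at this
  obtain ⟨c, hc⟩ := this
  have hval := congrArg Units.val hc
  have h00 := congr_fun (congr_fun hval 0) 0
  have h11 := congr_fun (congr_fun hval 1) 1
  simp [diagGL, Matrix.scalar_apply, Matrix.diagonal] at h00 h11
  ext
  rw [← h11, h00]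

theorem card_PGL2 (p : ℕ) [Fact p.Prime] :
    Nat.card (PGL2 (ZMod p)) = (p - 1) * p * (p + 1) := by
  have hp2 : 2 ≤ p := (Fact.out : p.Prime).two_le
  obtain ⟨k, hk⟩ : ∃ k, p = k + 1 := ⟨p - 1, by omega⟩
  have hGL : Nat.card (GL (Fin 2) (ZMod p)) = (p ^ 2 - 1) * (p ^ 2 - p) := by
    rw [Matrix.card_GL_field, Fin.prod_univ_two]
    simp [ZMod.card]
  have hcen : Nat.card (Subgroup.center (GL (Fin 2) (ZMod p))) = p - 1 := by
    rw [center_GL2_eq']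
    have hinj : Function.Injective
        (Units.map (Matrix.scalar (Fin 2) : ZMod p →+* Matrix (Fin 2) (Fin 2) (ZMod p)).toMonoidHom) := by
      apply Units.map_injective
      intro a b hab
      have := congr_fun (congr_fun hab 0) 0
      simpa [Matrix.scalar_apply, Matrix.diagonal] using this
    rw [Nat.card_congr (MonoidHom.ofInjective hinj).toEquiv.symm]
    rw [Nat.card_eq_fintype_card, ZMod.card_units_eq_totient, Nat.totient_prime Fact.out]
  have hquot := Subgroup.card_eq_card_quotient_mul_card_subgroup
    (Subgroup.center (GL (Fin 2) (ZMod p)))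
  rw [hGL, hcen] at hquot
  have h1 : p ^ 2 - 1 = k * (k + 2) := by
    have : k * (k + 2) + 1 = p ^ 2 := by subst hk; ring
    omega
  have h2 : p ^ 2 - p = (k + 1) * k := by
    have : (k + 1) * k + p = p ^ 2 := by subst hk; ring
    omega
  have hk1 : p - 1 = k := by omega
  rw [h1, h2, hk1] at hquot
  have hfin : Nat.card (PGL2 (ZMod p)) * k = k * (k + 2) * (k + 1) * k := by
    rw [show k * (k + 2) * (k + 1) * k = k * (k + 2) * ((k + 1) * k) by ring]
    exact hquot.symm
  have hkpos : 0 < k := by omega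
  have hcard := Nat.eq_of_mul_eq_mul_right hkpos hfin
  rw [hcard, hk1]
  subst hk
  ring

theorem exists_orderOf_eq_of_dvd {α : Type*} [Group α] [Finite α] [IsCyclic α] {n : ℕ}
    (hn : n ∣ Nat.card α) : ∃ g : α, orderOf g = n := by
  obtain ⟨g, hg⟩ := IsCyclic.exists_generator (α := α)
  have hord : orderOf g = Nat.card α := orderOf_eq_card_of_forall_mem_zpowers hg
  obtain ⟨c, hc⟩ := hn
  have hcardpos : 0 < Nat.card α := Nat.card_pos
  have hcpos : 0 < c := by
    rcases Nat.eq_zero_or_pos c with rfl | h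
    · omega
    · exact h
  refine ⟨g ^ c, ?_⟩
  rw [orderOf_pow, hord, hc, Nat.gcd_eq_right (Dvd.intro_left n rfl), Nat.mul_div_cancel _ hcpos]

theorem sylow_cyclic (p m : ℕ) [Fact p.Prime] (hm : 3 ≤ m) (hp : p = 2 ^ m - 1)
    (r : ℕ) [Fact r.Prime] (hr2 : r ≠ 2) (Q : Sylow r (PGL2 (ZMod p))) :
    IsCyclic Q := by
  have hrp : (r : ℕ).Prime := Fact.out
  have hpp : (p : ℕ).Prime := Fact.out
  have h2m : (8 : ℕ) ≤ 2 ^ m := by calc (8:ℕ) = 2 ^ 3 := by norm_num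
                                      _ ≤ 2 ^ m := Nat.pow_le_pow_right (by norm_num) hm
  have hp7 : 7 ≤ p := by omega
  have hNcard : Nat.card (PGL2 (ZMod p)) = (p - 1) * p * (p + 1) := card_PGL2 p
  have hcardQ := Q.card_eq_multiplicity
  by_cases hdvd : r ∣ Nat.card (PGL2 (ZMod p))
  · have hrp1 : ¬ r ∣ p + 1 := by
      intro hr
      rw [show p + 1 = 2 ^ m by omega] at hr
      exact hr2 ((Nat.prime_dvd_prime_iff_eq hrp Nat.prime_two).mp (hrp.dvd_of_dvd_pow hr))
    have hfac : (Nat.card (PGL2 (ZMod p))).factorization r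
        = (p - 1).factorization r + p.factorization r := by
      rw [hNcard, Nat.factorization_mul (Nat.mul_ne_zero (by omega) (by omega)) (by omega),
        Nat.factorization_mul (by omega) (by omega)]
      simp [Nat.factorization_eq_zero_of_not_dvd hrp1]
    by_cases hrp' : r = p
    · have h1 : (p - 1).factorization r = 0 :=
        Nat.factorization_eq_zero_of_not_dvd (by rw [hrp']; exact fun h => absurd (Nat.le_of_dvd (by omega) h) (by omega))
      have h2 : p.factorization r = 1 := by
        rw [hrp', Nat.Prime.factorization_self hpp]
      have : Nat.card Q = p := by rw [hcardQ, hfac, h1, h2, hrp']; ring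
      exact isCyclic_of_prime_card this
    · have hrdvdp : ¬ r ∣ p := fun h => hrp' ((Nat.prime_dvd_prime_iff_eq hrp hpp).mp h)
      have h2 : p.factorization r = 0 := Nat.factorization_eq_zero_of_not_dvd hrdvdp
      set a := (p - 1).factorization r with ha
      have hfac' : (Nat.card (PGL2 (ZMod p))).factorization r = a := by rw [hfac, h2]; omega
      have hcardu : Nat.card (ZMod p)ˣ = p - 1 := by
        rw [Nat.card_eq_fintype_card, ZMod.card_units_eq_totient, Nat.totient_prime hpp]
      have hdvd' : r ^ a ∣ Nat.card (ZMod p)ˣ := by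
        rw [hcardu, ha]; exact Nat.ordProj_dvd _ r
      obtain ⟨u, hu⟩ := exists_orderOf_eq_of_dvd hdvd'
      set z := pglDiag (ZMod p) u with hz
      have hordz : orderOf z = r ^ a := by
        rw [hz, orderOf_injective _ (pglDiag_injective (ZMod p)) u, hu]
      have hpgroup : IsPGroup r (Subgroup.zpowers z) :=
        IsPGroup.of_card (by rw [Nat.card_zpowers, hordz])
      obtain ⟨Q₀, hQ₀⟩ := hpgroup.exists_le_sylow
      have hcardQ₀ : Nat.card Q₀ = r ^ a := by
        rw [Q₀.card_eq_multiplicity, hfac']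
      have hmem : z ∈ Q₀ := hQ₀ (Subgroup.mem_zpowers z)
      haveI : IsCyclic Q₀ := isCyclic_of_orderOf_eq_card (⟨z, hmem⟩ : Q₀)
        (by rw [Subgroup.orderOf_mk, hordz, hcardQ₀])
      exact isCyclic_of_surjective (Sylow.equiv Q₀ Q) (Sylow.equiv Q₀ Q).surjective
  · rw [Nat.factorization_eq_zero_of_not_dvd hdvd, pow_zero] at hcardQ
    have : Subsingleton Q := Nat.card_eq_one_iff_unique.mp hcardQ |>.1
    exact isCyclic_of_subsingleton

/-- Let `G = PGL₂(p)` with `p = 2^m − 1` a Mersenne prime, `m ≥ 3`, and let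
`H ≤ G` be a subgroup of shape `C_p : C_d` (a normal cyclic subgroup `P` of
order `p` with cyclic quotient of order `d`), where `d` is an even proper
divisor of `p − 1` divisible by every prime divisor of `p − 1`. Then
`|G : H| = 2^m (p − 1)/d`, and the only derangements of prime order for the
action of `G` on the cosets of `H` are involutions. -/
theorem stmt_18 (p m d : ℕ) [Fact p.Prime] (hm : 3 ≤ m) (hp : p = 2 ^ m - 1)
    (H : Subgroup (PGL2 (ZMod p)))
    (hdvd : d ∣ p - 1) (hproper : d ≠ p - 1) (heven : Even d)
    (hdprimes : ∀ q : ℕ, q.Prime → q ∣ p - 1 → q ∣ d)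
    (P : Subgroup ↥H) [P.Normal] (hPcard : Nat.card P = p)
    (hPcyc : IsCyclic ↥P) (hQcyc : IsCyclic (↥H ⧸ P))
    (hQcard : Nat.card (↥H ⧸ P) = d) :
    H.index = 2 ^ m * (p - 1) / d ∧
    ∀ x : PGL2 (ZMod p), (orderOf x).Prime →
      (∀ y ∈ H, ¬ IsConj x y) → orderOf x = 2 := by
  have hpp : (p : ℕ).Prime := Fact.out
  have h2m : (8 : ℕ) ≤ 2 ^ m := by calc (8:ℕ) = 2 ^ 3 := by norm_num
                                      _ ≤ 2 ^ m := Nat.pow_le_pow_right (by norm_num) hm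
  have hp7 : 7 ≤ p := by omega
  have hd0 : d ≠ 0 := by
    rintro rfl
    rw [Nat.zero_dvd] at hdvd
    omega
  have hNcard : Nat.card (PGL2 (ZMod p)) = (p - 1) * p * (p + 1) := card_PGL2 p
  have hHcard : Nat.card H = d * p := by
    have := Subgroup.card_eq_card_quotient_mul_card_subgroup P
    rw [hQcard, hPcard] at this
    exact this
  constructor
  · have hmul := Subgroup.index_mul_card H
    rw [hHcard, hNcard] at hmul
    obtain ⟨e, he⟩ := hdvd
    have h2mp : 2 ^ m = p + 1 := by omega
    have hidx : H.index = e * (p + 1) := by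
      apply Nat.eq_of_mul_eq_mul_right (show 0 < d * p by positivity)
      rw [hmul, he]
      ring
    rw [hidx, h2mp, he, show (p + 1) * (d * e) = e * (p + 1) * d by ring,
      Nat.mul_div_cancel _ (by omega : 0 < d)]
  · intro x hx hder
    by_contra hne
    set r := orderOf x with hr
    haveI : Fact r.Prime := ⟨hx⟩
    have hdvdG : r ∣ (p - 1) * p * (p + 1) := hNcard ▸ orderOf_dvd_natCard x
    have hrp1 : ¬ r ∣ p + 1 := by
      intro hrd
      rw [show p + 1 = 2 ^ m by omega] at hrd
      exact hne ((Nat.prime_dvd_prime_iff_eq hx Nat.prime_two).mp (hx.dvd_of_dvd_pow hrd))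
    have hrH : r ∣ d * p := by
      rcases (Nat.Prime.dvd_mul hx).mp hdvdG with h | h
      · rcases (Nat.Prime.dvd_mul hx).mp h with h' | h'
        · exact Dvd.dvd.mul_right (hdprimes r hx h') p
        · exact Dvd.dvd.mul_left h' d
      · exact absurd h hrp1
    obtain ⟨y₀, hy₀⟩ := exists_prime_orderOf_dvd_card' (G := H) r (by rw [hHcard]; exact hrH)
    have hordy : orderOf (y₀ : PGL2 (ZMod p)) = r := by
      rw [Subgroup.orderOf_coe]; exact hy₀
    have hpx : IsPGroup r (Subgroup.zpowers x) :=
      IsPGroup.of_card (show Nat.card (Subgroup.zpowers x) = r ^ 1 by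
        rw [Nat.card_zpowers, pow_one])
    obtain ⟨Q', hQ'⟩ := hpx.exists_le_sylow
    have hpy : IsPGroup r (Subgroup.zpowers (y₀ : PGL2 (ZMod p))) :=
      IsPGroup.of_card (show Nat.card (Subgroup.zpowers ((y₀ : PGL2 (ZMod p)))) = r ^ 1 by
        rw [Nat.card_zpowers, hordy, pow_one])
    obtain ⟨Q, hQ⟩ := hpy.exists_le_sylow
    obtain ⟨g, hg⟩ := MulAction.exists_smul_eq (PGL2 (ZMod p)) Q' Q
    haveI : IsCyclic Q := sylow_cyclic p m hm hp r hne Q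
    have hmemQ' : x ∈ Q' := hQ' (Subgroup.mem_zpowers x)
    have hconjQ : (MulAut.conj g) x ∈ (Q : Subgroup (PGL2 (ZMod p))) := by
      have h1 : (MulAut.conj g) x ∈ MulAut.conj g • (Q' : Subgroup (PGL2 (ZMod p))) :=
        Subgroup.smul_mem_pointwise_smul _ _ _ hmemQ'
      rwa [← Sylow.coe_subgroup_smul, hg] at h1
    have hymem : (y₀ : PGL2 (ZMod p)) ∈ Q := hQ (Subgroup.mem_zpowers _)
    have hpow1 : (⟨(MulAut.conj g) x, hconjQ⟩ : Q) ^ r = 1 := by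
      have hxr : x ^ r = 1 := by rw [hr]; exact pow_orderOf_eq_one x
      have hgx : ((MulAut.conj g) x) ^ r = 1 := by
        rw [← map_pow, hxr]
        exact MulEquiv.map_one _
      exact Subtype.ext (by rw [SubmonoidClass.coe_pow]; rw [show ((⟨(MulAut.conj g) x, hconjQ⟩ : Q) : PGL2 (ZMod p)) = (MulAut.conj g) x from rfl, hgx]; rfl)
    have key : (⟨(MulAut.conj g) x, hconjQ⟩ : Q) ∈
        Subgroup.zpowers (⟨(y₀ : PGL2 (ZMod p)), hymem⟩ : Q) := by
      apply mem_zpowers_of_pow_eq_one' hx.pos hpow1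
      rw [Subgroup.orderOf_mk]
      exact hordy
    obtain ⟨k, hk⟩ := key
    have hmemH : (MulAut.conj g) x ∈ H := by
      have hcoe := congrArg (fun t : Q => (t : PGL2 (ZMod p))) hk
      simp only at hcoe
      rw [← hcoe]
      push_cast
      exact Subgroup.zpow_mem H y₀.2 k
    exact hder _ hmemH (isConj_iff.mpr ⟨g, by simp [MulAut.conj_apply]⟩)
end
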